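/- arXiv:2505.04988 — 6 statements merged into one kernel-verified Lean document; each statement's English description precedes it below -/
import Mathlib

section
/- Let p ≥ 1 be an integer, let r > 0, α > 0, b ≠ 0, and s be real numbers. Let κ be the unique real (2p−1)-th root of α·b/r and assume 1 + κ·b > 0. Then the function g(u) = r·u^(2p) + α·(s + b·u)^(2p) attains a unique global minimum on ℝ, at the point u* = −(κ/(1 + κ·b))·s. -/
lemma tangent_lt (n : ℕ) (hn : Even n) (h0 : n ≠ 0) {a x : ℝ} (hx : x ≠ a) :
    a ^ n + n * a ^ (n - 1) * (x - a) < x ^ n := by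
  have hconv := hn.strictConvexOn_pow h0
  have hd : HasDerivAt (fun y : ℝ => y ^ n) ((n : ℝ) * a ^ (n - 1)) a := hasDerivAt_pow n a
  rcases lt_or_gt_of_ne hx with h | h
  · have h1 := hconv.slope_lt_of_hasDerivAt (Set.mem_univ x) (Set.mem_univ a) h hd
    rw [slope_def_field, div_lt_iff₀ (by linarith)] at h1
    nlinarith [h1]
  · have h1 := hconv.lt_slope_of_hasDerivAt (Set.mem_univ a) (Set.mem_univ x) h hd
    rw [slope_def_field, lt_div_iff₀ (by linarith)] at h1
    nlinarith [h1]

/-- 2p-order completion: with `p ≥ 1`, `r, α > 0`, `b ≠ 0`, `κ` the unique real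
`(2p−1)`-th root of `α·b/r` and `1 + κ·b > 0`, the function
`g(u) = r·u^(2p) + α·(s + b·u)^(2p)` attains a unique global minimum on `ℝ`
at `u* = −(κ/(1 + κ·b))·s`. -/
theorem power_unique_min (p : ℕ) (hp : 1 ≤ p) (r α b s κ : ℝ)
    (hr : 0 < r) (hα : 0 < α) (hb : b ≠ 0)
    (hκ : κ ^ (2 * p - 1) = α * b / r) (hden : 0 < 1 + κ * b) :
    (∀ u : ℝ,
        r * (-(κ / (1 + κ * b)) * s) ^ (2 * p)
            + α * (s + b * (-(κ / (1 + κ * b)) * s)) ^ (2 * p)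
          ≤ r * u ^ (2 * p) + α * (s + b * u) ^ (2 * p)) ∧
    (∀ u : ℝ, u ≠ -(κ / (1 + κ * b)) * s →
        r * (-(κ / (1 + κ * b)) * s) ^ (2 * p)
            + α * (s + b * (-(κ / (1 + κ * b)) * s)) ^ (2 * p)
          < r * u ^ (2 * p) + α * (s + b * u) ^ (2 * p)) := by
  set a : ℝ := -(κ / (1 + κ * b)) * s with ha
  set t : ℝ := s + b * a with ht
  have hden' : (1 + κ * b) ≠ 0 := ne_of_gt hden
  have hts : t = s / (1 + κ * b) := by
    have hden'' : 1 + b * κ ≠ 0 := by rwa [mul_comm b κ]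
    rw [ht, ha]; field_simp; ring
  have hat : a = -κ * t := by
    rw [hts, ha]; field_simp
  have hodd : Odd (2 * p - 1) := ⟨p - 1, by omega⟩
  have key : r * a ^ (2 * p - 1) + α * b * t ^ (2 * p - 1) = 0 := by
    rw [hat, neg_mul, hodd.neg_pow, mul_pow, hκ]
    field_simp
    ring
  have hn0 : (2 * p) ≠ 0 := by omega
  have heven : Even (2 * p) := ⟨p, by ring⟩
  have strict : ∀ u : ℝ, u ≠ a →
      r * a ^ (2 * p) + α * t ^ (2 * p)
        < r * u ^ (2 * p) + α * (s + b * u) ^ (2 * p) := by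
    intro u hu
    have hA := tangent_lt (2 * p) heven hn0 hu
    have hne : s + b * u ≠ t := by
      rw [ht]
      intro h
      apply hu
      have : b * (u - a) = 0 := by linarith
      rcases mul_eq_zero.1 this with h' | h'
      · exact absurd h' hb
      · linarith [sub_eq_zero.1 h']
    have hB := tangent_lt (2 * p) heven hn0 hne
    have hz : r * ((2 * p : ℕ) * a ^ (2 * p - 1) * (u - a))
        + α * ((2 * p : ℕ) * t ^ (2 * p - 1) * ((s + b * u) - t)) = 0 := by
      have : (s + b * u) - t = b * (u - a) := by rw [ht]; ring
      rw [this]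
      push_cast
      linear_combination ((2 * p : ℝ) * (u - a)) * key
    nlinarith [mul_lt_mul_of_pos_left hA hr, mul_lt_mul_of_pos_left hB hα]
  constructor
  · intro u
    by_cases hu : u = a
    · rw [hu]
    · exact le_of_lt (strict u hu)
  · exact strict
end

section
/- Let p ≥ 1 be an integer, let r > 0, α > 0, b ≠ 0, and s be real numbers. Let κ be the unique real (2p−1)-th root of α·b/r, assume 1 + κ·b > 0, and set c = κ/(1 + κ·b). Then the minimum value of g(u) = r·u^(2p) + α·(s + b·u)^(2p) over u ∈ ℝ equals (r·c^(2p) + α·(1 − c·b)^(2p))·s^(2p), attained at u* = −c·s. -/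
/-- Minimum value of the 2p-order completion: with `c = κ/(1 + κ·b)`, the minimum of
`g(u) = r·u^(2p) + α·(s + b·u)^(2p)` over `ℝ` equals
`(r·c^(2p) + α·(1 − c·b)^(2p))·s^(2p)`, attained at `u* = −c·s`. -/
theorem power_min_value (p : ℕ) (hp : 1 ≤ p) (r α b s κ c : ℝ)
    (hr : 0 < r) (hα : 0 < α) (hb : b ≠ 0)
    (hκ : κ ^ (2 * p - 1) = α * b / r) (hden : 0 < 1 + κ * b)
    (hc : c = κ / (1 + κ * b)) :
    (r * (-c * s) ^ (2 * p) + α * (s + b * (-c * s)) ^ (2 * p)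
        = (r * c ^ (2 * p) + α * (1 - c * b) ^ (2 * p)) * s ^ (2 * p)) ∧
    (∀ u : ℝ,
        r * (-c * s) ^ (2 * p) + α * (s + b * (-c * s)) ^ (2 * p)
          ≤ r * u ^ (2 * p) + α * (s + b * u) ^ (2 * p)) := by
  have hnp : 2 * p = (2 * p - 1) + 1 := by omega
  have hodd : Odd (2 * p - 1) := by
    refine ⟨p - 1, by omega⟩
  have heven : Even (2 * p) := ⟨p, by ring⟩
  set f : ℝ → ℝ := fun u => r * u ^ (2 * p) + α * (s + b * u) ^ (2 * p) with hf
  -- key algebraic identity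
  have hden' : (1 + κ * b) ≠ 0 := ne_of_gt hden
  have h1cb : 1 - c * b = 1 / (1 + κ * b) := by
    rw [hc]; field_simp; ring
  have hcκ : c = κ * (1 - c * b) := by
    rw [h1cb, hc]; ring
  have key : r * c ^ (2 * p - 1) = α * b * (1 - c * b) ^ (2 * p - 1) := by
    rw [hcκ, mul_pow, hκ]
    field_simp
    congr 1
    linear_combination (-b) * hcκ
  constructor
  · have h1 : (-c * s) ^ (2 * p) = c ^ (2 * p) * s ^ (2 * p) := by
      rw [show (-c * s) = -(c * s) by ring, heven.neg_pow, mul_pow]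
    have h2 : (s + b * (-c * s)) ^ (2 * p) = (1 - c * b) ^ (2 * p) * s ^ (2 * p) := by
      rw [show s + b * (-c * s) = (1 - c * b) * s by ring, mul_pow]
    rw [h1, h2]; ring
  · -- convexity of f
    have hconv : ConvexOn ℝ Set.univ f := by
      have hA : ConvexOn ℝ Set.univ fun u : ℝ => r * u ^ (2 * p) := by
        simpa [smul_eq_mul] using (Even.convexOn_pow (𝕜 := ℝ) heven).smul hr.le
      have hB : ConvexOn ℝ Set.univ fun u : ℝ => α * (s + b * u) ^ (2 * p) := by
        have base : ConvexOn ℝ Set.univ fun x : ℝ => α * x ^ (2 * p) := by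
          simpa [smul_eq_mul] using (Even.convexOn_pow (𝕜 := ℝ) heven).smul hα.le
        have heq : (fun u : ℝ => α * (s + b * u) ^ (2 * p))
            = (fun x : ℝ => α * x ^ (2 * p)) ∘ (AffineMap.lineMap (s : ℝ) (s + b)) := by
          funext u
          simp only [Function.comp_apply, AffineMap.lineMap_apply, smul_eq_mul,
            vsub_eq_sub, vadd_eq_add, add_sub_cancel_left]
          ring_nf
        rw [heq]
        simpa using base.comp_affineMap (AffineMap.lineMap (s : ℝ) (s + b))
      exact hA.add hB
    -- derivative of f
    have hderiv : ∀ u : ℝ, HasDerivAt f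
        (((2 * p : ℕ) : ℝ) * (r * u ^ (2 * p - 1) + α * b * (s + b * u) ^ (2 * p - 1))) u := by
      intro u
      have h1 := (hasDerivAt_pow (2 * p) u).const_mul r
      have hin : HasDerivAt (fun u : ℝ => s + b * u) b u := by
        exact (((hasDerivAt_id u).const_mul b).const_add s).congr_deriv (by ring)
      have h2 : HasDerivAt (fun u : ℝ => α * (s + b * u) ^ (2 * p))
          (α * (((2 * p : ℕ) : ℝ) * (s + b * u) ^ (2 * p - 1) * b)) u :=
        ((hasDerivAt_pow (2 * p) (s + b * u)).comp u hin).const_mul α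
      exact (h1.add h2).congr_deriv (by ring)
    have hderiv0 : HasDerivAt f 0 (-c * s) := by
      have := hderiv (-c * s)
      have hval : (((2 * p : ℕ) : ℝ) * (r * (-c * s) ^ (2 * p - 1)
          + α * b * (s + b * (-c * s)) ^ (2 * p - 1))) = 0 := by
        have e1 : (-c * s) ^ (2 * p - 1) = -(c ^ (2 * p - 1) * s ^ (2 * p - 1)) := by
          rw [show (-c * s) = -(c * s) by ring, hodd.neg_pow, mul_pow]
        have e2 : (s + b * (-c * s)) ^ (2 * p - 1)
            = (1 - c * b) ^ (2 * p - 1) * s ^ (2 * p - 1) := by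
          rw [show s + b * (-c * s) = (1 - c * b) * s by ring, mul_pow]
        rw [e1, e2]
        have : r * -(c ^ (2 * p - 1) * s ^ (2 * p - 1))
            + α * b * ((1 - c * b) ^ (2 * p - 1) * s ^ (2 * p - 1))
            = (α * b * (1 - c * b) ^ (2 * p - 1) - r * c ^ (2 * p - 1)) * s ^ (2 * p - 1) := by
          ring
        rw [this, ← key]
        ring
      rwa [hval] at this
    intro u
    show f (-c * s) ≤ f u
    rcases lt_trichotomy u (-c * s) with h | h | h
    · have := hconv.slope_le_of_hasDerivAt (Set.mem_univ u) (Set.mem_univ (-c * s)) h hderiv0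
      rw [slope_def_field] at this
      have hne : -c * s - u > 0 := by linarith
      have : (f (-c * s) - f u) / (-c * s - u) ≤ 0 := by
        simpa [div_eq_iff, sub_ne_zero] using this
      have := (div_nonpos_iff.mp this)
      rcases this with ⟨h1, h2⟩ | ⟨h1, h2⟩
      · linarith
      · linarith
    · simp [hf, h]
    · have := hconv.le_slope_of_hasDerivAt (Set.mem_univ (-c * s)) (Set.mem_univ u) h hderiv0
      rw [slope_def_field] at this
      have hne : u - (-c * s) > 0 := by linarith
      have h0 : 0 ≤ (f u - f (-c * s)) / (u - (-c * s)) := by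
        simpa using this
      have := (div_nonneg_iff.mp h0)
      rcases this with ⟨h1, h2⟩ | ⟨h1, h2⟩
      · linarith
      · linarith
end

section
/- Let I ≥ 2 and p ≥ 1 be integers, and consider the one-shot game in which player i ∈ {1,…,I} chooses u_i ∈ ℝ to minimize J_i(u) = r_i·u_i^(2p) + α_i·(s + Σ_{j=1}^I b_j·u_j)^(2p), where s ∈ ℝ and r_i > 0, α_i > 0, b_i > 0 for all i. For each i set κ_i = (α_i·b_i/r_i)^(1/(2p−1)) > 0 and c_i = κ_i/(1 + κ_i·b_i), and let E be the I×I matrix with E_{ii} = 1 and E_{ij} = c_i·b_j for i ≠ j. Then u* ∈ ℝ^I is a Nash equilibrium (i.e., for every i and every v ∈ ℝ, J_i(u*) ≤ J_i(u*_1,…,u*_{i−1}, v, u*_{i+1},…,u*_I)) if and only if E·u* = −s·c. In particular, if E is invertible, the unique Nash equilibrium is u*_i = −(E⁻¹·c)_i·s. -/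
/-!
Player `i`'s cost is a convex function of `u_i` (a sum of even powers of affine functions), so
`u_i` is a best response exactly when its derivative vanishes:
`r_i u_i^(2p-1) + α_i b_i T^(2p-1) = 0` with `T = s + Σ_j b_j u_j`. As `t ↦ t^(2p-1)` is
injective, this says `u_i = -κ_i T`; solving for `u_i` turns it into row `i` of `E u = -s c`.
-/

open Set Finset Matrix

theorem ConvexOn.isMinOn_univ_iff_hasDerivAt {f : ℝ → ℝ} {f' x : ℝ}
    (hf : ConvexOn ℝ univ f) (hd : HasDerivAt f f' x) : IsMinOn f univ x ↔ f' = 0 := by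
  refine ⟨fun h => (h.isLocalMin Filter.univ_mem).hasDerivAt_eq_zero hd, fun h => ?_⟩
  refine hf.isMinOn_of_rightDeriv_eq_zero (by simp) ?_
  rw [hd.hasDerivWithinAt.derivWithin (uniqueDiffWithinAt_Ioi x), h]

theorem convexOn_pow_add_pow {n : ℕ} (hn : Even n) {R A : ℝ} (hR : 0 ≤ R) (hA : 0 ≤ A)
    (a B : ℝ) : ConvexOn ℝ univ fun v : ℝ => R * v ^ n + A * (a + B * v) ^ n := by
  have hpow : ConvexOn ℝ univ fun v : ℝ => v ^ n := hn.convexOn_pow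
  have haff : ConvexOn ℝ univ fun v : ℝ => (a + B * v) ^ n := by
    have h := hpow.comp_affineMap (AffineMap.lineMap (k := ℝ) a (a + B))
    have heq :
        (fun v : ℝ => v ^ n) ∘ AffineMap.lineMap a (a + B) = fun v => (a + B * v) ^ n := by
      ext v
      simp only [Function.comp_apply, AffineMap.lineMap_apply_ring', add_sub_cancel_left]
      ring
    rwa [heq, preimage_univ] at h
  exact (hpow.smul hR).add (haff.smul hA)

theorem hasDerivAt_pow_add_pow (n : ℕ) (R A a B x : ℝ) :
    HasDerivAt (fun v : ℝ => R * v ^ n + A * (a + B * v) ^ n)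
      (n * (R * x ^ (n - 1) + A * B * (a + B * x) ^ (n - 1))) x := by
  have hlin : HasDerivAt (fun v : ℝ => a + B * v) B x := by
    simpa using ((hasDerivAt_id x).const_mul B).const_add a
  exact (((hasDerivAt_pow n x).const_mul R).add
    (((hasDerivAt_pow n _).comp x hlin).const_mul A)).congr_deriv (by ring)

theorem forall_le_pow_add_pow_iff {n : ℕ} (hn : Even n) (hn0 : n ≠ 0) {R A : ℝ} (hR : 0 ≤ R)
    (hA : 0 ≤ A) (a B x : ℝ) :
    (∀ v, R * x ^ n + A * (a + B * x) ^ n ≤ R * v ^ n + A * (a + B * v) ^ n) ↔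
      R * x ^ (n - 1) + A * B * (a + B * x) ^ (n - 1) = 0 := by
  rw [← isMinOn_univ_iff (f := fun v : ℝ => R * v ^ n + A * (a + B * v) ^ n),
    (convexOn_pow_add_pow hn hR hA a B).isMinOn_univ_iff_hasDerivAt
      (hasDerivAt_pow_add_pow n R A a B x), mul_eq_zero]
  simp [hn0]

theorem Odd.mul_pow_add_mul_pow_eq_zero_iff {m : ℕ} (hm : Odd m) {R A κ : ℝ} (hR : R ≠ 0)
    (hκ : κ ^ m = A / R) (x y : ℝ) : R * x ^ m + A * y ^ m = 0 ↔ x = -κ * y := by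
  have : R * x ^ m + A * y ^ m = R * (x ^ m - (-κ * y) ^ m) := by
    rw [mul_pow, hm.neg_pow, hκ]; field_simp; ring
  rw [this, mul_eq_zero, sub_eq_zero, hm.pow_inj]
  simp [hR]

theorem eq_neg_mul_add_iff {κ B : ℝ} (hd : 1 + κ * B ≠ 0) (a x : ℝ) :
    x = -κ * (a + B * x) ↔ x = -(κ / (1 + κ * B)) * a := by
  field_simp
  constructor <;> intro h <;> linear_combination h

theorem Fintype.sum_mul_update {ι R : Type*} [Fintype ι] [DecidableEq ι] [CommRing R]
    (b u : ι → R) (i : ι) (v : R) :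
    ∑ j, b j * Function.update u i v j = (∑ j, b j * u j - b i * u i) + b i * v := by
  rw [← sum_erase_add _ _ (mem_univ i), ← sum_erase_eq_sub (mem_univ i),
    Function.update_self]
  congr 1
  refine Finset.sum_congr rfl fun j hj => ?_
  rw [Function.update_of_ne (ne_of_mem_erase hj)]

theorem Matrix.mulVec_apply_of_diag_of_offDiag {ι R : Type*} [Fintype ι] [DecidableEq ι]
    [CommRing R] {E : Matrix ι ι R} {c b : ι → R}
    (hEd : ∀ i, E i i = 1) (hEo : ∀ i j, i ≠ j → E i j = c i * b j)
    (u : ι → R) (i : ι) :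
    (E *ᵥ u) i = u i + c i * (∑ j, b j * u j - b i * u i) := by
  rw [mulVec, dotProduct, ← sum_erase_add _ _ (mem_univ i), hEd,
    ← sum_erase_eq_sub (mem_univ i), mul_sum, one_mul, add_comm]
  congr 1
  refine Finset.sum_congr rfl fun j hj => ?_
  rw [hEo i j (ne_of_mem_erase hj).symm, mul_assoc]

theorem Matrix.mulVec_eq_iff_eq_inv_mulVec {ι R : Type*} [Fintype ι] [DecidableEq ι]
    [CommRing R] {A : Matrix ι ι R} (hA : IsUnit A) {x y : ι → R} :
    A *ᵥ x = y ↔ x = A⁻¹ *ᵥ y := by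
  have hdet := (A.isUnit_iff_isUnit_det).mp hA
  constructor <;> rintro rfl
  · rw [mulVec_mulVec, nonsing_inv_mul A hdet, one_mulVec]
  · rw [mulVec_mulVec, mul_nonsing_inv A hdet, one_mulVec]

theorem one_shot_game_nash_general (I p : ℕ) (hp : 1 ≤ p) (s : ℝ)
    (r α b : Fin I → ℝ) (hr : ∀ i, 0 < r i) (hα : ∀ i, 0 < α i) (hb : ∀ i, 0 < b i)
    (κ : Fin I → ℝ) (hκ : ∀ i, κ i ^ (2 * p - 1) = α i * b i / r i)
    (c : Fin I → ℝ) (hc : ∀ i, c i = κ i / (1 + κ i * b i))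
    (E : Matrix (Fin I) (Fin I) ℝ)
    (hEd : ∀ i, E i i = 1) (hEo : ∀ i j, i ≠ j → E i j = c i * b j)
    (ustar : Fin I → ℝ) :
    ((∀ i, ∀ v : ℝ,
        r i * ustar i ^ (2 * p) + α i * (s + ∑ j, b j * ustar j) ^ (2 * p)
          ≤ r i * v ^ (2 * p)
              + α i * (s + ∑ j, b j * Function.update ustar i v j) ^ (2 * p))
        ↔ E.mulVec ustar = -s • c) ∧
    (IsUnit E →
      ((∀ i, ∀ v : ℝ,
          r i * ustar i ^ (2 * p) + α i * (s + ∑ j, b j * ustar j) ^ (2 * p)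
            ≤ r i * v ^ (2 * p)
                + α i * (s + ∑ j, b j * Function.update ustar i v j) ^ (2 * p))
          ↔ ∀ i, ustar i = -(E⁻¹.mulVec c i) * s)) := by
  have hodd : Odd (2 * p - 1) := ⟨p - 1, by omega⟩
  have hκpos (i : Fin I) : 0 < κ i :=
    hodd.pow_pos_iff.mp (by rw [hκ i]; exact div_pos (mul_pos (hα i) (hb i)) (hr i))
  have nash_iff (i : Fin I) :
      (∀ v : ℝ, r i * ustar i ^ (2 * p) + α i * (s + ∑ j, b j * ustar j) ^ (2 * p)
          ≤ r i * v ^ (2 * p) + α i * (s + ∑ j, b j * Function.update ustar i v j) ^ (2 * p))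
        ↔ (E *ᵥ ustar) i = (-s • c) i := by
    set a := s + (∑ j, b j * ustar j - b i * ustar i)
    have hsum : s + ∑ j, b j * ustar j = a + b i * ustar i := by ring
    simp_rw [Fintype.sum_mul_update, hsum, ← add_assoc]
    rw [forall_le_pow_add_pow_iff (even_two_mul p) (by omega) (hr i).le (hα i).le,
      hodd.mul_pow_add_mul_pow_eq_zero_iff (hr i).ne' (hκ i),
      eq_neg_mul_add_iff (add_pos one_pos (mul_pos (hκpos i) (hb i))).ne', ← hc,
      mulVec_apply_of_diag_of_offDiag hEd hEo]
    simp only [Pi.smul_apply, smul_eq_mul, a]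
    constructor <;> intro h <;> linear_combination h
  have nash_iff_mulVec := (forall_congr' nash_iff).trans funext_iff.symm
  refine ⟨nash_iff_mulVec, fun hE => nash_iff_mulVec.trans ?_⟩
  rw [mulVec_eq_iff_eq_inv_mulVec hE, mulVec_smul, funext_iff]
  simp only [Pi.smul_apply, smul_eq_mul, neg_mul, mul_comm s]

/-- One-shot 2p-order game: `u*` is a Nash equilibrium of the game with costs
`J_i(u) = r_i·u_i^(2p) + α_i·(s + Σ_j b_j·u_j)^(2p)` iff `E·u* = −s·c`, where
`κ_i^(2p−1) = α_i·b_i/r_i`, `c_i = κ_i/(1 + κ_i·b_i)`, and `E` has unit diagonal and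
off-diagonal entries `c_i·b_j`. If `E` is invertible, the unique Nash equilibrium is
`u*_i = −(E⁻¹·c)_i·s`. -/
theorem one_shot_game_nash (I p : ℕ) (hI : 2 ≤ I) (hp : 1 ≤ p) (s : ℝ)
    (r α b : Fin I → ℝ) (hr : ∀ i, 0 < r i) (hα : ∀ i, 0 < α i) (hb : ∀ i, 0 < b i)
    (κ : Fin I → ℝ) (hκ : ∀ i, κ i ^ (2 * p - 1) = α i * b i / r i)
    (c : Fin I → ℝ) (hc : ∀ i, c i = κ i / (1 + κ i * b i))
    (E : Matrix (Fin I) (Fin I) ℝ)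
    (hEd : ∀ i, E i i = 1) (hEo : ∀ i j, i ≠ j → E i j = c i * b j)
    (ustar : Fin I → ℝ) :
    ((∀ i, ∀ v : ℝ,
        r i * ustar i ^ (2 * p) + α i * (s + ∑ j, b j * ustar j) ^ (2 * p)
          ≤ r i * v ^ (2 * p)
              + α i * (s + ∑ j, b j * Function.update ustar i v j) ^ (2 * p))
        ↔ E.mulVec ustar = -s • c) ∧
    (IsUnit E →
      ((∀ i, ∀ v : ℝ,
          r i * ustar i ^ (2 * p) + α i * (s + ∑ j, b j * ustar j) ^ (2 * p)
            ≤ r i * v ^ (2 * p)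
                + α i * (s + ∑ j, b j * Function.update ustar i v j) ^ (2 * p))
          ↔ ∀ i, ustar i = -(E⁻¹.mulVec c i) * s)) :=
  one_shot_game_nash_general I p hp s r α b hr hα hb κ hκ c hc E hEd hEo ustar
end

section
/- (Proposition 1, quartic deterministic game.) Fix integers N ≥ 1 and I ≥ 2. Consider the dynamics x̄_{k+1} = ā_k·x̄_k + Σ_{i=1}^I b̄_{ik}·ū_{ik}, k = 0,…,N−1, with given x̄_0 ∈ ℝ, and for each agent i the cost L_i(ū) = q̄_{iN}·x̄_N⁴ + Σ_{k=0}^{N−1} (q̄_{ik}·x̄_k⁴ + r̄_{ik}·ū_{ik}⁴), where all weights q̄_{ik}, q̄_{iN}, r̄_{ik} are positive. Define backwards: ᾱ_{iN} = q̄_{iN}; for k = N−1,…,0, κ_{ik} = the real cube root of ᾱ_{i,k+1}·b̄_{ik}/r̄_{ik}, c̄_{ik} = κ_{ik}/(1 + κ_{ik}·b̄_{ik}), Ē_k the I×I matrix with unit diagonal and (Ē_k)_{ij} = c̄_{ik}·b̄_{jk} for i ≠ j, and ᾱ_{ik} = q̄_{ik} + r̄_{ik}·((Ē_k⁻¹·c̄_k)_i·ā_k)⁴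 + ᾱ_{i,k+1}·(ā_k − Σ_{j=1}^I (Ē_k⁻¹·c̄_k)_j·ā_k·b̄_{jk})⁴. Assume that for every k the matrix Ē_k is invertible and 1 + κ_{ik}·b̄_{ik} > 0 for all i. Then the feedback strategies ū*_{ik} = −(Ē_k⁻¹·c̄_k)_i·ā_k·x̄_k form a Nash equilibrium: for each agent i, if every agent j ≠ i plays the feedback strategy ū*_{jk} along the realized trajectory, then among all control sequences (ū_{ik})_{k=0}^{N−1} ∈ ℝ^N the cost L_i is minimized by playing ū*_{ik} along the resulting trajectory, and the equilibrium cost of agent i equals ᾱ_{i0}·x̄_0⁴. -/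
lemma quartic_key (R A B u0 y u : ℝ) (hR : 0 < R) (hA : 0 < A)
    (hfoc : R * u0 ^ 3 + A * B * y ^ 3 = 0) :
    R * u0 ^ 4 + A * y ^ 4 ≤ R * u ^ 4 + A * (y + B * (u - u0)) ^ 4 := by
  have hC : 0 < R + A * B ^ 4 := by positivity
  have key : 4 * (R + A * B ^ 4) * ((R * u ^ 4 + A * (y + B * (u - u0)) ^ 4) - (R * u0 ^ 4 + A * y ^ 4))
      = (u - u0) ^ 2 * ((2 * (R + A * B ^ 4) * (u - u0) + 4 * (R * u0 + A * B ^ 3 * y)) ^ 2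
          + 8 * (R * u0 - A * B ^ 3 * y) ^ 2
          + 8 * R * A * B ^ 2 * (3 * B ^ 2 * u0 ^ 2 - 2 * B * u0 * y + 3 * y ^ 2))
        + 16 * (R + A * B ^ 4) * (u - u0) * (R * u0 ^ 3 + A * B * y ^ 3) := by ring
  rw [hfoc, mul_zero] at key
  have h1 : 0 ≤ 3 * B ^ 2 * u0 ^ 2 - 2 * B * u0 * y + 3 * y ^ 2 := by
    nlinarith [sq_nonneg (B*u0 - y), sq_nonneg (B*u0 + y)]
  have h2 : 0 ≤ (u - u0) ^ 2 * ((2 * (R + A * B ^ 4) * (u - u0) + 4 * (R * u0 + A * B ^ 3 * y)) ^ 2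
          + 8 * (R * u0 - A * B ^ 3 * y) ^ 2
          + 8 * R * A * B ^ 2 * (3 * B ^ 2 * u0 ^ 2 - 2 * B * u0 * y + 3 * y ^ 2)) := by positivity
  nlinarith [h2, key, hC]

/-- Proposition 1 (quartic deterministic game): with the backward recursion
`ᾱ_{iN} = q̄_{iN}`, `κ_{ik}³ = ᾱ_{i,k+1}·b̄_{ik}/r̄_{ik}`, `c̄_{ik} = κ_{ik}/(1+κ_{ik}·b̄_{ik})`,
`Ē_k` with unit diagonal and off-diagonal `c̄_{ik}·b̄_{jk}`, and
`ᾱ_{ik} = q̄_{ik} + r̄_{ik}·((Ē_k⁻¹·c̄_k)_i·ā_k)⁴ + ᾱ_{i,k+1}·(ā_k − Σ_j (Ē_k⁻¹·c̄_k)_j·ā_k·b̄_{jk})⁴`,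
the feedback strategies `ū*_{ik} = −(Ē_k⁻¹·c̄_k)_i·ā_k·x̄_k` form a Nash equilibrium of the
quartic game, and the equilibrium cost of agent `i` equals `ᾱ_{i0}·x̄_0⁴`. -/
theorem quartic_deterministic_game_nash
    (N I : ℕ) (hN : 1 ≤ N) (hI : 2 ≤ I)
    (a : ℕ → ℝ) (b : Fin I → ℕ → ℝ)
    (q : Fin I → ℕ → ℝ) (qN : Fin I → ℝ) (r : Fin I → ℕ → ℝ)
    (hq : ∀ i k, k < N → 0 < q i k) (hqN : ∀ i, 0 < qN i)
    (hr : ∀ i k, k < N → 0 < r i k)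
    (x0 : ℝ)
    (alpha kappa c : Fin I → ℕ → ℝ)
    (E : ℕ → Matrix (Fin I) (Fin I) ℝ)
    (halphaN : ∀ i, alpha i N = qN i)
    (hkappa : ∀ i k, k < N → kappa i k ^ 3 = alpha i (k + 1) * b i k / r i k)
    (hc : ∀ i k, k < N → c i k = kappa i k / (1 + kappa i k * b i k))
    (hEd : ∀ k, k < N → ∀ i, E k i i = 1)
    (hEo : ∀ k, k < N → ∀ i j, i ≠ j → E k i j = c i k * b j k)
    (hEinv : ∀ k, k < N → IsUnit (E k))
    (hden : ∀ i k, k < N → 0 < 1 + kappa i k * b i k)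
    (halpha : ∀ i k, k < N →
      alpha i k = q i k + r i k * ((E k)⁻¹.mulVec (fun j => c j k) i * a k) ^ 4
        + alpha i (k + 1)
            * (a k - ∑ j, (E k)⁻¹.mulVec (fun l => c l k) j * a k * b j k) ^ 4)
    (xstar : ℕ → ℝ) (hxstar0 : xstar 0 = x0)
    (hxstar : ∀ k, k < N → xstar (k + 1)
      = a k * xstar k + ∑ j, b j k * (-((E k)⁻¹.mulVec (fun l => c l k) j) * a k * xstar k)) :
    (∀ i : Fin I, ∀ u : ℕ → ℝ, ∀ x : ℕ → ℝ, x 0 = x0 →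
      (∀ k, k < N → x (k + 1)
          = a k * x k + b i k * u k
            + ∑ j ∈ Finset.univ.erase i,
                b j k * (-((E k)⁻¹.mulVec (fun l => c l k) j) * a k * x k)) →
      qN i * xstar N ^ 4
          + ∑ k ∈ Finset.range N,
              (q i k * xstar k ^ 4
                + r i k * (-((E k)⁻¹.mulVec (fun l => c l k) i) * a k * xstar k) ^ 4)
        ≤ qN i * x N ^ 4 + ∑ k ∈ Finset.range N, (q i k * x k ^ 4 + r i k * u k ^ 4)) ∧
    (∀ i : Fin I,
      qN i * xstar N ^ 4
          + ∑ k ∈ Finset.range N,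
              (q i k * xstar k ^ 4
                + r i k * (-((E k)⁻¹.mulVec (fun l => c l k) i) * a k * xstar k) ^ 4)
        = alpha i 0 * x0 ^ 4) := by
  
  classical
  -- positivity of alpha
  have halphapos : ∀ d k, k + d = N → ∀ i, 0 < alpha i k := by
    intro d
    induction d with
    | zero =>
      intro k hk i
      have : k = N := by omega
      subst this; rw [halphaN]; exact hqN i
    | succ d ih =>
      intro k hk i
      have hkN : k < N := by omega
      have h' : 0 < alpha i (k+1) := ih (k+1) (by omega) i
      rw [halpha i k hkN]
      have h1 := hq i k hkN
      have h2 : 0 ≤ r i k * ((E k)⁻¹.mulVec (fun j => c j k) i * a k) ^ 4 :=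
        mul_nonneg (hr i k hkN).le (by positivity)
      have h3 : 0 ≤ alpha i (k+1)
          * (a k - ∑ j, (E k)⁻¹.mulVec (fun l => c l k) j * a k * b j k) ^ 4 :=
        mul_nonneg h'.le (by positivity)
      linarith
  -- main one-step lemma
  have main : ∀ (i : Fin I) (k : ℕ), k < N → ∀ x u : ℝ,
      (alpha i k * x ^ 4 ≤ q i k * x ^ 4 + r i k * u ^ 4
        + alpha i (k+1) * (a k * x + b i k * u
            + ∑ j ∈ Finset.univ.erase i,
                b j k * (-((E k)⁻¹.mulVec (fun l => c l k) j) * a k * x)) ^ 4)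
      ∧ (alpha i k * x ^ 4 = q i k * x ^ 4
          + r i k * (-((E k)⁻¹.mulVec (fun l => c l k) i) * a k * x) ^ 4
          + alpha i (k+1)
              * ((a k - ∑ j, (E k)⁻¹.mulVec (fun l => c l k) j * a k * b j k) * x) ^ 4) := by
    intro i k hk x u
    set M : Fin I → ℝ := (E k)⁻¹.mulVec (fun l => c l k) with hM
    have hrk := hr i k hk
    have hak : 0 < alpha i (k+1) := halphapos (N - (k+1)) (k+1) (by omega) i
    have hDk := hden i k hk
    have hDne : (1 + kappa i k * b i k) ≠ 0 := ne_of_gt hDk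
    -- E ⬝ M = c
    have hdet : IsUnit (E k).det := (Matrix.isUnit_iff_isUnit_det _).mp (hEinv k hk)
    have hEc : (E k).mulVec M = fun l => c l k := by
      rw [hM, Matrix.mulVec_mulVec, Matrix.mul_nonsing_inv _ hdet, Matrix.one_mulVec]
    have hEci : M i + c i k * ∑ j ∈ Finset.univ.erase i, b j k * M j = c i k := by
      have h := congrFun hEc i
      rw [Matrix.mulVec, dotProduct] at h
      rw [← Finset.add_sum_erase _ _ (Finset.mem_univ i)] at h
      rw [hEd k hk i, one_mul] at h
      have h2 : ∑ j ∈ Finset.univ.erase i, E k i j * M j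
          = c i k * ∑ j ∈ Finset.univ.erase i, b j k * M j := by
        rw [Finset.mul_sum]
        refine Finset.sum_congr rfl fun j hj => ?_
        rw [hEo k hk i j (Ne.symm (Finset.ne_of_mem_erase hj))]
        ring
      rw [h2] at h
      exact h
    set S : ℝ := a k - ∑ j ∈ Finset.univ.erase i, M j * a k * b j k with hS
    set phi : ℝ := a k - ∑ j, M j * a k * b j k with hphi
    have hsum1 : ∑ j ∈ Finset.univ.erase i, M j * a k * b j k
        = a k * ∑ j ∈ Finset.univ.erase i, b j k * M j := by
      rw [Finset.mul_sum]; exact Finset.sum_congr rfl fun j _ => by ring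
    have fA : c i k * S = M i * a k := by
      rw [hS, hsum1]
      linear_combination (- a k) * hEci
    have fB : c i k * (1 + kappa i k * b i k) = kappa i k := by
      rw [hc i k hk]; field_simp
    have fC : phi = S - b i k * (M i * a k) := by
      rw [hphi, hS, ← Finset.add_sum_erase _ (fun j => M j * a k * b j k) (Finset.mem_univ i)]
      ring
    have fD : phi * (1 + kappa i k * b i k) = S := by
      rw [fC]
      linear_combination b i k * (1 + kappa i k * b i k) * fA - b i k * S * fB
    have fE : M i * a k = kappa i k * phi := by
      have h : M i * a k * (1 + kappa i k * b i k) = kappa i k * phi * (1 + kappa i k * b i k) := by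
        rw [← fA]
        linear_combination S * fB - kappa i k * fD
      exact mul_right_cancel₀ hDne h
    have hrk3 : r i k * kappa i k ^ 3 = alpha i (k+1) * b i k := by
      have h := hkappa i k hk
      field_simp at h
      linarith [h]
    -- the equality branch
    have heq : alpha i k * x ^ 4 = q i k * x ^ 4
        + r i k * (-(M i) * a k * x) ^ 4 + alpha i (k+1) * (phi * x) ^ 4 := by
      have h := halpha i k hk
      have : alpha i k = q i k + r i k * (M i * a k) ^ 4 + alpha i (k+1) * phi ^ 4 := h
      rw [this]; ring
    refine ⟨?_, heq⟩
    -- the inequality branch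
    have hx1 : a k * x + b i k * u
        + ∑ j ∈ Finset.univ.erase i, b j k * (-(M j) * a k * x)
        = (phi * x) + b i k * (u - (-(M i) * a k * x)) := by
      have h2 : ∑ j ∈ Finset.univ.erase i, b j k * (-(M j) * a k * x)
          = -(∑ j ∈ Finset.univ.erase i, M j * a k * b j k) * x := by
        rw [neg_mul, Finset.sum_mul, ← Finset.sum_neg_distrib]
        exact Finset.sum_congr rfl fun j _ => by ring
      rw [h2, fC]
      ring
    rw [hx1, heq]
    have hfoc : r i k * (-(M i) * a k * x) ^ 3
        + alpha i (k+1) * b i k * (phi * x) ^ 3 = 0 := by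
      have h1 : (-(M i) * a k * x) ^ 3 = -((M i * a k) ^ 3 * x ^ 3) := by ring
      rw [h1, fE]
      have : r i k * kappa i k ^ 3 * (phi ^ 3 * x ^ 3)
          = alpha i (k+1) * b i k * (phi * x) ^ 3 := by
        rw [hrk3]; ring
      linear_combination - this
    have := quartic_key (r i k) (alpha i (k+1)) (b i k)
      (-(M i) * a k * x) (phi * x) u hrk hak hfoc
    linarith
  -- equality part
  have heqpart : ∀ i : Fin I,
      qN i * xstar N ^ 4
        + ∑ k ∈ Finset.range N,
            (q i k * xstar k ^ 4
              + r i k * (-((E k)⁻¹.mulVec (fun l => c l k) i) * a k * xstar k) ^ 4)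
      = alpha i 0 * x0 ^ 4 := by
    intro i
    have hstep : ∀ k ∈ Finset.range N,
        q i k * xstar k ^ 4
          + r i k * (-((E k)⁻¹.mulVec (fun l => c l k) i) * a k * xstar k) ^ 4
        = alpha i k * xstar k ^ 4 - alpha i (k+1) * xstar (k+1) ^ 4 := by
      intro k hk
      rw [Finset.mem_range] at hk
      have hx : xstar (k+1)
          = (a k - ∑ j, (E k)⁻¹.mulVec (fun l => c l k) j * a k * b j k) * xstar k := by
        rw [hxstar k hk]
        have h2 : ∑ j, b j k * (-((E k)⁻¹.mulVec (fun l => c l k) j) * a k * xstar k)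
            = -(∑ j, (E k)⁻¹.mulVec (fun l => c l k) j * a k * b j k) * xstar k := by
          rw [neg_mul, Finset.sum_mul, ← Finset.sum_neg_distrib]
          exact Finset.sum_congr rfl fun j _ => by ring
        rw [h2]; ring
      have h := (main i k hk (xstar k) 0).2
      rw [hx]
      linarith
    rw [Finset.sum_congr rfl hstep, Finset.sum_range_sub' (fun k => alpha i k * xstar k ^ 4)]
    rw [halphaN i, hxstar0]
    ring
  refine ⟨?_, heqpart⟩
  intro i u x hx0 hx
  rw [heqpart i]
  have hstep : ∀ k ∈ Finset.range N,
      alpha i k * x k ^ 4 - alpha i (k+1) * x (k+1) ^ 4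
        ≤ q i k * x k ^ 4 + r i k * u k ^ 4 := by
    intro k hk
    rw [Finset.mem_range] at hk
    have h := (main i k hk (x k) (u k)).1
    rw [← hx k hk] at h
    linarith
  have hsum := Finset.sum_le_sum hstep
  rw [Finset.sum_range_sub' (fun k => alpha i k * x k ^ 4)] at hsum
  rw [halphaN i] at hsum
  rw [hx0] at hsum
  linarith
end

section
/- (Proposition 2, 2p-order deterministic game.) Fix integers N ≥ 1, I ≥ 2 and p ≥ 1. Consider the dynamics x̄_{k+1} = ā_k·x̄_k + Σ_{i=1}^I b̄_{ik}·ū_{ik}, k = 0,…,N−1, with given x̄_0 ∈ ℝ, and for each agent i the cost L_i(ū) = q̄_{iN}·x̄_N^(2p) + Σ_{k=0}^{N−1} (q̄_{ik}·x̄_k^(2p) + r̄_{ik}·ū_{ik}^(2p)), all weights positive. Define backwards: ᾱ_{iN} = q̄_{iN}; for k = N−1,…,0, κ_{ik} = the unique real (2p−1)-th root of ᾱ_{i,k+1}·b̄_{ik}/r̄_{ik}, c̄_{ik} = κ_{ik}/(1 + κ_{ik}·b̄_{ik}), Ē_k the I×I matrix with unit diagonal and (Ē_k)_{ij} = c̄_{ik}·b̄_{jk}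 for i ≠ j, and ᾱ_{ik} = q̄_{ik} + r̄_{ik}·((Ē_k⁻¹·c̄_k)_i·ā_k)^(2p) + ᾱ_{i,k+1}·(ā_k − Σ_{j=1}^I (Ē_k⁻¹·c̄_k)_j·ā_k·b̄_{jk})^(2p). Assume that for every k the matrix Ē_k is invertible and 1 + κ_{ik}·b̄_{ik} > 0 for all i. Then the feedback strategies ū*_{ik} = −(Ē_k⁻¹·c̄_k)_i·ā_k·x̄_k form a Nash equilibrium: for each agent i, if every agent j ≠ i plays ū*_{jk} along the realized trajectory, then among all control sequences (ū_{ik})_{k=0}^{N−1} ∈ ℝ^N the cost L_i is minimized by playing ū*_{ik} along the resulting trajectory, and the equilibrium cost of agent i equals ᾱ_{i0}·x̄_0^(2p). -/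
lemma tangent_even_pow (n : ℕ) (hn : Even n) (v t : ℝ) :
    v ^ n + (n : ℝ) * v ^ (n - 1) * (t - v) ≤ t ^ n := by
  rcases lt_trichotomy v t with h | h | h
  · have hs := hn.convexOn_pow.le_slope_of_hasDerivAt (Set.mem_univ v) (Set.mem_univ t) h
      (hasDerivAt_pow n v)
    rw [slope_def_field] at hs
    have ht : 0 < t - v := by linarith
    have := (le_div_iff₀ ht).mp hs
    nlinarith
  · subst h; simp
  · have hs := hn.convexOn_pow.slope_le_of_hasDerivAt (Set.mem_univ t) (Set.mem_univ v) h
      (hasDerivAt_pow n v)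
    rw [slope_def_field] at hs
    have ht : 0 < v - t := by linarith
    have := (div_le_iff₀ ht).mp hs
    nlinarith

lemma game_step (n n2 : ℕ) (hn : Odd n) (hn2 : n2 = n + 1)
    (r α' bi mi D A u : ℝ) (hr : 0 < r) (hα : 0 ≤ α')
    (hkey : r * mi ^ n = α' * bi * D ^ n) :
    r * (-mi * A) ^ n2 + α' * (A * D) ^ n2
      ≤ r * u ^ n2 + α' * (A * (D + mi * bi) + bi * u) ^ n2 := by
  subst hn2
  have he : Even (n + 1) := hn.add_one
  have t1 := tangent_even_pow (n + 1) he (-mi * A) u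
  have t2 := tangent_even_pow (n + 1) he (A * D) (A * (D + mi * bi) + bi * u)
  simp only [Nat.add_sub_cancel] at t1 t2
  have h1 := mul_le_mul_of_nonneg_left t1 hr.le
  have h2 := mul_le_mul_of_nonneg_left t2 hα
  have hneg : (-mi * A) ^ n = -(mi ^ n * A ^ n) := by
    rw [show -mi * A = -(mi * A) by ring, hn.neg_pow, mul_pow]
  have hAD : (A * D) ^ n = A ^ n * D ^ n := mul_pow _ _ _
  have hlin : r * (-mi * A) ^ (n + 1) + α' * (A * D) ^ (n + 1)
      = r * ((-mi * A) ^ (n + 1) + ((n : ℝ) + 1) * (-mi * A) ^ n * (u - -mi * A))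
        + α' * ((A * D) ^ (n + 1)
          + ((n : ℝ) + 1) * (A * D) ^ n * (A * (D + mi * bi) + bi * u - A * D)) := by
    rw [hneg, hAD]
    linear_combination (((n : ℝ) + 1) * (u + mi * A) * A ^ n) * hkey
  push_cast at h1 h2
  linarith [h1, h2, hlin]



/-- Proposition 2 (2p-order deterministic game): with the backward recursion
`ᾱ_{iN} = q̄_{iN}`, `κ_{ik}^(2p−1) = ᾱ_{i,k+1}·b̄_{ik}/r̄_{ik}`,
`c̄_{ik} = κ_{ik}/(1+κ_{ik}·b̄_{ik})`, `Ē_k` with unit diagonal and off-diagonal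
`c̄_{ik}·b̄_{jk}`, and `ᾱ_{ik} = q̄_{ik} + r̄_{ik}·((Ē_k⁻¹·c̄_k)_i·ā_k)^(2p)
+ ᾱ_{i,k+1}·(ā_k − Σ_j (Ē_k⁻¹·c̄_k)_j·ā_k·b̄_{jk})^(2p)`, the feedback strategies
`ū*_{ik} = −(Ē_k⁻¹·c̄_k)_i·ā_k·x̄_k` form a Nash equilibrium of the 2p-order game,
and the equilibrium cost of agent `i` equals `ᾱ_{i0}·x̄_0^(2p)`. -/
theorem power_deterministic_game_nash
    (N I p : ℕ) (hN : 1 ≤ N) (hI : 2 ≤ I) (hp : 1 ≤ p)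
    (a : ℕ → ℝ) (b : Fin I → ℕ → ℝ)
    (q : Fin I → ℕ → ℝ) (qN : Fin I → ℝ) (r : Fin I → ℕ → ℝ)
    (hq : ∀ i k, k < N → 0 < q i k) (hqN : ∀ i, 0 < qN i)
    (hr : ∀ i k, k < N → 0 < r i k)
    (x0 : ℝ)
    (alpha kappa c : Fin I → ℕ → ℝ)
    (E : ℕ → Matrix (Fin I) (Fin I) ℝ)
    (halphaN : ∀ i, alpha i N = qN i)
    (hkappa : ∀ i k, k < N → kappa i k ^ (2 * p - 1) = alpha i (k + 1) * b i k / r i k)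
    (hc : ∀ i k, k < N → c i k = kappa i k / (1 + kappa i k * b i k))
    (hEd : ∀ k, k < N → ∀ i, E k i i = 1)
    (hEo : ∀ k, k < N → ∀ i j, i ≠ j → E k i j = c i k * b j k)
    (hEinv : ∀ k, k < N → IsUnit (E k))
    (hden : ∀ i k, k < N → 0 < 1 + kappa i k * b i k)
    (halpha : ∀ i k, k < N →
      alpha i k = q i k + r i k * ((E k)⁻¹.mulVec (fun j => c j k) i * a k) ^ (2 * p)
        + alpha i (k + 1)
            * (a k - ∑ j, (E k)⁻¹.mulVec (fun l => c l k) j * a k * b j k) ^ (2 * p))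
    (xstar : ℕ → ℝ) (hxstar0 : xstar 0 = x0)
    (hxstar : ∀ k, k < N → xstar (k + 1)
      = a k * xstar k + ∑ j, b j k * (-((E k)⁻¹.mulVec (fun l => c l k) j) * a k * xstar k)) :
    (∀ i : Fin I, ∀ u : ℕ → ℝ, ∀ x : ℕ → ℝ, x 0 = x0 →
      (∀ k, k < N → x (k + 1)
          = a k * x k + b i k * u k
            + ∑ j ∈ Finset.univ.erase i,
                b j k * (-((E k)⁻¹.mulVec (fun l => c l k) j) * a k * x k)) →
      qN i * xstar N ^ (2 * p)
          + ∑ k ∈ Finset.range N,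
              (q i k * xstar k ^ (2 * p)
                + r i k * (-((E k)⁻¹.mulVec (fun l => c l k) i) * a k * xstar k) ^ (2 * p))
        ≤ qN i * x N ^ (2 * p) + ∑ k ∈ Finset.range N, (q i k * x k ^ (2 * p) + r i k * u k ^ (2 * p))) ∧
    (∀ i : Fin I,
      qN i * xstar N ^ (2 * p)
          + ∑ k ∈ Finset.range N,
              (q i k * xstar k ^ (2 * p)
                + r i k * (-((E k)⁻¹.mulVec (fun l => c l k) i) * a k * xstar k) ^ (2 * p))
        = alpha i 0 * x0 ^ (2 * p)) := by
  have heven : Even (2 * p) := even_two_mul p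
  have hnp : 2 * p = (2 * p - 1) + 1 := by omega
  have hodd : Odd (2 * p - 1) := by
    rcases heven with ⟨m, hm⟩
    exact ⟨p - 1, by omega⟩
  -- positivity of alpha
  have halphapos : ∀ k, k ≤ N → ∀ i, 0 < alpha i k := by
    have key : ∀ d k, k ≤ N → N - k ≤ d → ∀ i, 0 < alpha i k := by
      intro d
      induction d with
      | zero =>
        intro k hk hle i
        have : k = N := by omega
        rw [this, halphaN]; exact hqN i
      | succ d ih =>
        intro k hk hle i
        rcases eq_or_lt_of_le hk with he | hlt
        · rw [he, halphaN]; exact hqN i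
        · have h1 : 0 < alpha i (k + 1) := ih (k + 1) (by omega) (by omega) i
          rw [halpha i k hlt]
          have h2 := hq i k hlt
          have h3 := (hr i k hlt).le
          have h4 : (0:ℝ) ≤ ((E k)⁻¹.mulVec (fun j => c j k) i * a k) ^ (2 * p) :=
            heven.pow_nonneg _
          have h5 : (0:ℝ) ≤
              (a k - ∑ j, (E k)⁻¹.mulVec (fun l => c l k) j * a k * b j k) ^ (2 * p) :=
            heven.pow_nonneg _
          nlinarith
    intro k hk i; exact key (N - k) k hk le_rfl i
  -- key identity  r * M i ^ (2p-1) = alpha' * b i * D ^ (2p-1)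
  have hmkey : ∀ i k, k < N →
      r i k * ((E k)⁻¹.mulVec (fun l => c l k) i) ^ (2 * p - 1)
        = alpha i (k + 1) * b i k
          * (1 - ∑ j, (E k)⁻¹.mulVec (fun l => c l k) j * b j k) ^ (2 * p - 1) := by
    intro i k hk
    set Mv : Fin I → ℝ := (E k)⁻¹.mulVec (fun l => c l k) with hMv
    have hdet : IsUnit (E k).det := (Matrix.isUnit_iff_isUnit_det _).mp (hEinv k hk)
    have hEm : ∑ j, E k i j * Mv j = c i k := by
      have h : (E k).mulVec ((E k)⁻¹.mulVec (fun l => c l k)) = (fun l => c l k) := by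
        rw [Matrix.mulVec_mulVec, Matrix.mul_nonsing_inv _ hdet, Matrix.one_mulVec]
      have := congrFun h i
      simpa [Matrix.mulVec, dotProduct, hMv] using this
    have hsplit : ∑ j, E k i j * Mv j
        = Mv i + c i k * ∑ j ∈ Finset.univ.erase i, b j k * Mv j := by
      rw [← Finset.add_sum_erase _ _ (Finset.mem_univ i), hEd k hk i, one_mul,
        Finset.mul_sum]
      congr 1
      refine Finset.sum_congr rfl fun j hj => ?_
      rw [hEo k hk i j (Ne.symm (Finset.ne_of_mem_erase hj))]; ring
    have herase : ∑ j ∈ Finset.univ.erase i, b j k * Mv j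
        = (∑ j, Mv j * b j k) - Mv i * b i k := by
      have h2 : ∑ j ∈ Finset.univ.erase i, b j k * Mv j
          = ∑ j ∈ Finset.univ.erase i, Mv j * b j k :=
        Finset.sum_congr rfl fun j _ => mul_comm _ _
      rw [h2, ← Finset.sum_erase_add Finset.univ (fun j => Mv j * b j k) (Finset.mem_univ i)]
      ring
    have hne : (1 + kappa i k * b i k) ≠ 0 := (hden i k hk).ne'
    have h0 : Mv i + c i k * ((∑ j, Mv j * b j k) - Mv i * b i k) = c i k := by
      rw [← herase, ← hsplit, hEm]
    rw [hc i k hk] at h0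
    have hMi : Mv i = kappa i k * (1 - ∑ j, Mv j * b j k) := by
      field_simp at h0
      linarith [h0]
    rw [hMi, mul_pow, hkappa i k hk]
    have hrne : r i k ≠ 0 := (hr i k hk).ne'
    field_simp
    try ring
  -- step equality (value identity along any state x)
  have stepEq : ∀ i k, k < N → ∀ x : ℝ,
      alpha i k * x ^ (2 * p)
        = q i k * x ^ (2 * p)
          + r i k * (-((E k)⁻¹.mulVec (fun l => c l k) i) * a k * x) ^ (2 * p)
          + alpha i (k + 1)
              * (a k * x + ∑ j, b j k * (-((E k)⁻¹.mulVec (fun l => c l k) j) * a k * x))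
                ^ (2 * p) := by
    intro i k hk x
    set Mv : Fin I → ℝ := (E k)⁻¹.mulVec (fun l => c l k) with hMv
    have hsum1 : ∑ j, b j k * (-(Mv j) * a k * x)
        = (∑ j, Mv j * a k * b j k) * (-x) := by
      rw [Finset.sum_mul]
      refine Finset.sum_congr rfl fun j _ => by ring
    have h1 : a k * x + ∑ j, b j k * (-(Mv j) * a k * x)
        = (a k - ∑ j, Mv j * a k * b j k) * x := by
      rw [hsum1]; ring
    have h2 : (-(Mv i) * a k * x) ^ (2 * p) = (Mv i * a k) ^ (2 * p) * x ^ (2 * p) := by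
      rw [show -(Mv i) * a k * x = -(Mv i * a k * x) by ring, heven.neg_pow, ← mul_pow]
    rw [h1, h2, mul_pow (a k - ∑ j, Mv j * a k * b j k) x (2 * p), halpha i k hk]
    ring
  -- step inequality
  have step : ∀ i k, k < N → ∀ x u : ℝ,
      alpha i k * x ^ (2 * p)
        ≤ q i k * x ^ (2 * p) + r i k * u ^ (2 * p)
          + alpha i (k + 1)
              * (a k * x + b i k * u
                + ∑ j ∈ Finset.univ.erase i,
                    b j k * (-((E k)⁻¹.mulVec (fun l => c l k) j) * a k * x)) ^ (2 * p) := by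
    intro i k hk x u
    set Mv : Fin I → ℝ := (E k)⁻¹.mulVec (fun l => c l k) with hMv
    set D : ℝ := 1 - ∑ j, Mv j * b j k with hD
    have hα' : 0 < alpha i (k + 1) := halphapos (k + 1) (by omega) i
    have hkey := hmkey i k hk
    have hgs := game_step (2 * p - 1) (2 * p) hodd hnp (r i k) (alpha i (k + 1))
      (b i k) (Mv i) D (a k * x) u (hr i k hk) hα'.le hkey
    -- rewrite both state expressions
    have herase : ∑ j ∈ Finset.univ.erase i, b j k * (-(Mv j) * a k * x)
        = (∑ j, Mv j * b j k) * (-(a k * x)) - Mv i * b i k * (-(a k * x)) := by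
      have h2 : ∑ j ∈ Finset.univ.erase i, b j k * (-(Mv j) * a k * x)
          = ∑ j ∈ Finset.univ.erase i, (Mv j * b j k) * (-(a k * x)) :=
        Finset.sum_congr rfl fun j _ => by ring
      rw [h2, ← Finset.sum_mul,
        ← Finset.sum_erase_add Finset.univ (fun j => Mv j * b j k) (Finset.mem_univ i)]
      ring
    have hstate : a k * x + b i k * u
        + ∑ j ∈ Finset.univ.erase i, b j k * (-(Mv j) * a k * x)
        = a k * x * (D + Mv i * b i k) + b i k * u := by
      rw [herase, hD]; ring
    have hstar : alpha i k * x ^ (2 * p)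
        = q i k * x ^ (2 * p) + r i k * (-(Mv i) * (a k * x)) ^ (2 * p)
          + alpha i (k + 1) * (a k * x * D) ^ (2 * p) := by
      have h := stepEq i k hk x
      have hsum1 : a k * x + ∑ j, b j k * (-(Mv j) * a k * x) = a k * x * D := by
        have : ∑ j, b j k * (-(Mv j) * a k * x)
            = (∑ j, Mv j * b j k) * (-(a k * x)) := by
          rw [Finset.sum_mul]
          refine Finset.sum_congr rfl fun j _ => by ring
        rw [this, hD]; ring
      rw [hsum1] at h
      rw [h, show -(Mv i) * a k * x = -(Mv i) * (a k * x) by ring]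
    rw [hstate, hstar]
    calc q i k * x ^ (2 * p) + r i k * (-(Mv i) * (a k * x)) ^ (2 * p)
          + alpha i (k + 1) * (a k * x * D) ^ (2 * p)
        ≤ q i k * x ^ (2 * p) + (r i k * u ^ (2 * p)
            + alpha i (k + 1) * (a k * x * (D + Mv i * b i k) + b i k * u) ^ (2 * p)) := by
          linarith [hgs]
      _ = q i k * x ^ (2 * p) + r i k * u ^ (2 * p)
            + alpha i (k + 1) * (a k * x * (D + Mv i * b i k) + b i k * u) ^ (2 * p) := by
          ring
  -- part 2 : equilibrium cost
  have part2 : ∀ i : Fin I,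
      qN i * xstar N ^ (2 * p)
          + ∑ k ∈ Finset.range N,
              (q i k * xstar k ^ (2 * p)
                + r i k * (-((E k)⁻¹.mulVec (fun l => c l k) i) * a k * xstar k) ^ (2 * p))
        = alpha i 0 * x0 ^ (2 * p) := by
    intro i
    have hterm : ∀ k ∈ Finset.range N,
        q i k * xstar k ^ (2 * p)
            + r i k * (-((E k)⁻¹.mulVec (fun l => c l k) i) * a k * xstar k) ^ (2 * p)
          = alpha i k * xstar k ^ (2 * p) - alpha i (k + 1) * xstar (k + 1) ^ (2 * p) := by
      intro k hk
      have hkN := Finset.mem_range.mp hk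
      have h := stepEq i k hkN (xstar k)
      rw [hxstar k hkN]
      linarith [h]
    rw [Finset.sum_congr rfl hterm,
      Finset.sum_range_sub' (fun k => alpha i k * xstar k ^ (2 * p)) N,
      halphaN i, hxstar0]
    ring
  refine ⟨?_, part2⟩
  intro i u x hx0 hx
  have hterm : ∀ k ∈ Finset.range N,
      alpha i k * x k ^ (2 * p) - alpha i (k + 1) * x (k + 1) ^ (2 * p)
        ≤ q i k * x k ^ (2 * p) + r i k * u k ^ (2 * p) := by
    intro k hk
    have hkN := Finset.mem_range.mp hk
    have h := step i k hkN (x k) (u k)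
    rw [hx k hkN]
    linarith [h]
  have hsum := Finset.sum_le_sum hterm
  rw [Finset.sum_range_sub' (fun k => alpha i k * x k ^ (2 * p)) N] at hsum
  have hαN : 0 < alpha i N := halphapos N le_rfl i
  rw [part2 i]
  rw [halphaN i, hx0] at hsum
  linarith [hsum]
end

section
/- (Proposition 4, variance-aware 2p-order game with additive noise.) Fix integers N ≥ 1, I ≥ 2, p ≥ 1, the same probabilistic setup, dynamics x_{k+1} = ā_k·x_k + Σ_{i=1}^I b̄_{ik}·u_{ik} + ε_{k+1}, and the cost E[L_i] with L_i = q_{iN}·var(x_N) + q̄_{iN}·x̄_N^(2p) + Σ_{k=0}^{N−1} (q_{ik}·var(x_k) + q̄_{ik}·x̄_k^(2p) + r_{ik}·var(u_{ik}) + r̄_{ik}·ū_{ik}^(2p)), all weights positive. Define backwards ᾱ_{iN} = q̄_{iN}, α_{iN} = q_{iN}, γ̄_{iN} = 0; κ_{ik} = the real (2p−1)-th root of ᾱ_{i,k+1}·b̄_{ik}/r̄_{ik}, c̄_{ik} = κ_{ik}/(1 + κ_{ik}·b̄_{ik}), c_{ik} = α_{i,k+1}·b̄_{ik}/(r_{ik}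 + α_{i,k+1}·b̄_{ik}²); Ē_k, E_k the I×I matrices with unit diagonal and off-diagonal entries c̄_{ik}·b̄_{jk}, c_{ik}·b̄_{jk} respectively; ᾱ_{ik} = q̄_{ik} + r̄_{ik}·((Ē_k⁻¹·c̄_k)_i·ā_k)^(2p) + ᾱ_{i,k+1}·(ā_k − Σ_j (Ē_k⁻¹·c̄_k)_j·ā_k·b̄_{jk})^(2p); α_{ik} = q_{ik} + r_{ik}·((E_k⁻¹·c_k)_i·ā_k)² + α_{i,k+1}·(ā_k − Σ_j (E_k⁻¹·c_k)_j·ā_k·b̄_{jk})²; γ̄_{ik} = γ̄_{i,k+1} + α_{i,k+1}·E[ε_{k+1}²]. Assume for every k that Ē_k and E_k are invertible, 1 + κ_{ik}·b̄_{ik} > 0, and r_{ik} + α_{i,k+1}·b̄_{ik}² > 0 for all i. Then the feedback strategies u*_{ik} = −(Ē_k⁻¹·c̄_k)_i·ā_k·x̄_k − (E_k⁻¹·c_k)_i·ā_k·(x_k − x̄_k) form a Nash equilibrium (in the same sense as before, over adapted square-integrable strategies), and the equilibrium expected cost of agent i equals α_{i0}·var(x_0) + ᾱ_{i0}·(E[x_0])^(2p)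 + γ̄_{i0}. -/
open MeasureTheory ProbabilityTheory

/-- The σ-algebra `σ(x₀, ε₁, …, ε_k)` generated by the initial state and the
noises up to time `k`. -/
def sigmaUpTo {Ω : Type*} (x0 : Ω → ℝ) (eps : ℕ → Ω → ℝ) (k : ℕ) :
    MeasurableSpace Ω :=
  MeasurableSpace.comap x0 inferInstance
    ⊔ ⨆ j ∈ Finset.Icc 1 k, MeasurableSpace.comap (eps j) inferInstance

/-- The state-and-mean-field-type feedback
`−(Ē⁻¹·c̄)_j·ā·x̄ − (E⁻¹·c)_j·ā·(x − x̄)` of agent `j`. -/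
noncomputable def mfFeedback {I : ℕ} (Ebar E : Matrix (Fin I) (Fin I) ℝ)
    (cbar c : Fin I → ℝ) (a m ξ : ℝ) (j : Fin I) : ℝ :=
  -(Ebar⁻¹.mulVec cbar j) * a * m - (E⁻¹.mulVec c j) * a * (ξ - m)

/-- The variance-aware `2p`-order cost of an agent along a state trajectory `x`
with own controls `v`. -/
noncomputable def powerVarCost {Ω : Type*} [MeasurableSpace Ω]
    (μ : Measure Ω) (N p : ℕ) (qN qbarN : ℝ) (q qbar r rbar : ℕ → ℝ)
    (x v : ℕ → Ω → ℝ) : ℝ :=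
  qN * variance (x N) μ + qbarN * (∫ ω, x N ω ∂μ) ^ (2 * p)
    + ∑ k ∈ Finset.range N,
        (q k * variance (x k) μ + qbar k * (∫ ω, x k ω ∂μ) ^ (2 * p)
          + r k * variance (v k) μ + rbar k * (∫ ω, v k ω ∂μ) ^ (2 * p))

lemma helper_integrable_mul {Ω : Type*} [MeasurableSpace Ω] {μ : Measure Ω} {f g : Ω → ℝ}
    (hf : MemLp f 2 μ) (hg : MemLp g 2 μ) : Integrable (fun ω => f ω * g ω) μ := by
  rw [← memLp_one_iff_integrable]
  exact hg.smul (p := 2) (q := 2) (r := 1) hf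

lemma helper_tangent {n : ℕ} (hn : Even n) (x y : ℝ) :
    x ^ n + (n : ℝ) * x ^ (n - 1) * (y - x) ≤ y ^ n := by
  have hconv : ConvexOn ℝ Set.univ fun t : ℝ => t ^ n := hn.convexOn_pow
  have hderiv : HasDerivAt (fun t : ℝ => t ^ n) ((n : ℝ) * x ^ (n - 1)) x := hasDerivAt_pow n x
  rcases lt_trichotomy x y with h | h | h
  · have h2 := hconv.le_slope_of_hasDerivAt (Set.mem_univ x) (Set.mem_univ y) h hderiv
    rw [slope_def_field] at h2
    have hxy : (0:ℝ) < y - x := by linarith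
    have h3 := (le_div_iff₀ hxy).mp h2
    linarith
  · subst h; simp
  · have h2 := hconv.slope_le_of_hasDerivAt (Set.mem_univ y) (Set.mem_univ x) h hderiv
    rw [slope_def_field] at h2
    have hxy : (0:ℝ) < x - y := by linarith
    have h3 := (div_le_iff₀ hxy).mp h2
    linarith

lemma helper_mean_min {p : ℕ} (hp : 1 ≤ p) {rb ab bb c0 ustar : ℝ}
    (hrb : 0 ≤ rb) (hab : 0 ≤ ab)
    (hFOC : rb * ustar ^ (2 * p - 1) + ab * bb * (c0 + bb * ustar) ^ (2 * p - 1) = 0)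
    (u : ℝ) :
    rb * ustar ^ (2 * p) + ab * (c0 + bb * ustar) ^ (2 * p)
      ≤ rb * u ^ (2 * p) + ab * (c0 + bb * u) ^ (2 * p) := by
  have hev : Even (2 * p) := ⟨p, two_mul p⟩
  have h1 := mul_le_mul_of_nonneg_left (helper_tangent hev ustar u) hrb
  have h2 := mul_le_mul_of_nonneg_left
    (helper_tangent hev (c0 + bb * ustar) (c0 + bb * u)) hab
  have hkey : rb * (ustar ^ (2 * p) + (↑(2 * p)) * ustar ^ (2 * p - 1) * (u - ustar))
      + ab * ((c0 + bb * ustar) ^ (2 * p)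
          + (↑(2 * p)) * (c0 + bb * ustar) ^ (2 * p - 1) * ((c0 + bb * u) - (c0 + bb * ustar)))
      = rb * ustar ^ (2 * p) + ab * (c0 + bb * ustar) ^ (2 * p)
        + (↑(2 * p)) * (u - ustar)
            * (rb * ustar ^ (2 * p - 1) + ab * bb * (c0 + bb * ustar) ^ (2 * p - 1)) := by
    ring
  rw [hFOC, mul_zero, add_zero] at hkey
  linarith

lemma helper_quad {r al bb h A xi v : ℝ} (hpos : 0 < r + al * bb ^ 2)
    (hid : (r + al * bb ^ 2) * h = al * bb * A) :
    (r * h ^ 2 + al * (A - bb * h) ^ 2) * xi ^ 2 ≤ r * v ^ 2 + al * (A * xi + bb * v) ^ 2 := by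
  have hkey : r * v ^ 2 + al * (A * xi + bb * v) ^ 2
        - (r * h ^ 2 + al * (A - bb * h) ^ 2) * xi ^ 2
        - (r + al * bb ^ 2) * (v + h * xi) ^ 2
      = 2 * (v * xi + h * xi ^ 2) * (al * bb * A - (r + al * bb ^ 2) * h) := by
    ring
  have h0 : al * bb * A - (r + al * bb ^ 2) * h = 0 := by rw [hid, sub_self]
  rw [h0, mul_zero] at hkey
  nlinarith [mul_nonneg hpos.le (sq_nonneg (v + h * xi))]

lemma helper_row {I : ℕ} {M : Matrix (Fin I) (Fin I) ℝ} (hM : IsUnit M)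
    (cv bv : Fin I → ℝ)
    (hd : ∀ l, M l l = 1) (ho : ∀ l j, l ≠ j → M l j = cv l * bv j) (i : Fin I) :
    M⁻¹.mulVec cv i + cv i * ∑ j ∈ Finset.univ.erase i, bv j * M⁻¹.mulVec cv j = cv i := by
  have h1 : M.mulVec (M⁻¹.mulVec cv) = cv := by
    rw [Matrix.mulVec_mulVec, Matrix.mul_nonsing_inv _ ((Matrix.isUnit_iff_isUnit_det _).mp hM),
      Matrix.one_mulVec]
  have h2 := congrFun h1 i
  rw [Matrix.mulVec, dotProduct] at h2
  rw [← Finset.add_sum_erase _ _ (Finset.mem_univ i), hd i, one_mul] at h2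
  have h3 : ∑ x ∈ Finset.univ.erase i, M i x * M⁻¹.mulVec cv x
      = cv i * ∑ j ∈ Finset.univ.erase i, bv j * M⁻¹.mulVec cv j := by
    rw [Finset.mul_sum]
    refine Finset.sum_congr rfl fun j hj => ?_
    rw [ho i j (Finset.ne_of_mem_erase hj).symm]
    ring
  rw [h3] at h2
  exact h2

lemma sigmaUpTo_le {Ω : Type*} [m0 : MeasurableSpace Ω] {x0 : Ω → ℝ} {eps : ℕ → Ω → ℝ}
    (hx0m : Measurable x0) (hepsm : ∀ k, Measurable (eps k)) (k : ℕ) :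
    sigmaUpTo x0 eps k ≤ m0 := by
  refine sup_le hx0m.comap_le (iSup₂_le fun j _ => (hepsm j).comap_le)

lemma sigmaUpTo_mono {Ω : Type*} {x0 : Ω → ℝ} {eps : ℕ → Ω → ℝ} {k l : ℕ} (h : k ≤ l) :
    sigmaUpTo x0 eps k ≤ sigmaUpTo x0 eps l := by
  refine sup_le_sup_left ?_ _
  refine iSup₂_le fun j hj => ?_
  rw [Finset.mem_Icc] at hj
  exact le_biSup (fun j => MeasurableSpace.comap (eps j) inferInstance)
    (Finset.mem_Icc.mpr ⟨hj.1, hj.2.trans h⟩)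

lemma measurable_sigmaUpTo_x0 {Ω : Type*} {x0 : Ω → ℝ} {eps : ℕ → Ω → ℝ} (k : ℕ) :
    @Measurable Ω ℝ (sigmaUpTo x0 eps k) _ x0 :=
  Measurable.of_comap_le le_sup_left

lemma measurable_sigmaUpTo_eps {Ω : Type*} {x0 : Ω → ℝ} {eps : ℕ → Ω → ℝ} {j k : ℕ}
    (h1 : 1 ≤ j) (h2 : j ≤ k) :
    @Measurable Ω ℝ (sigmaUpTo x0 eps k) _ (eps j) :=
  Measurable.of_comap_le (le_trans
    (le_biSup (fun j => MeasurableSpace.comap (eps j) inferInstance)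
      (Finset.mem_Icc.mpr ⟨h1, h2⟩)) le_sup_right)

lemma helper_indep {Ω : Type*} [MeasurableSpace Ω] {μ : Measure Ω} {N : ℕ}
    {x0 : Ω → ℝ} {eps : ℕ → Ω → ℝ}
    (hx0m : Measurable x0) (hepsm : ∀ k, Measurable (eps k))
    (hindep : iIndepFun
      (fun k : Fin (N + 1) => if (k : ℕ) = 0 then x0 else eps k) μ)
    {k : ℕ} (hk : k < N) :
    Indep (sigmaUpTo x0 eps k) (MeasurableSpace.comap (eps (k + 1)) inferInstance) μ := by
  set F : Fin (N + 1) → Ω → ℝ := fun j => if (j : ℕ) = 0 then x0 else eps j with hF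
  set s : Fin (N + 1) → MeasurableSpace Ω :=
    fun j => MeasurableSpace.comap (F j) inferInstance with hs
  have h_le : ∀ j, s j ≤ ‹MeasurableSpace Ω› := by
    intro j
    by_cases h : (j : ℕ) = 0
    · simpa [hs, hF, h, -Fin.val_eq_zero_iff] using hx0m.comap_le
    · simpa [hs, hF, h, -Fin.val_eq_zero_iff] using (hepsm j).comap_le
  have hbi := indep_biSup_compl h_le hindep {j : Fin (N + 1) | (j : ℕ) ≤ k}
  refine indep_of_indep_of_le_right (indep_of_indep_of_le_left hbi ?_) ?_
  · refine sup_le ?_ ?_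
    · have h0 : ((0 : Fin (N + 1)) : ℕ) = 0 := rfl
      have : MeasurableSpace.comap x0 inferInstance = s 0 := by simp [hs, hF, h0]
      rw [this]
      exact le_biSup s (by simp [Set.mem_setOf_eq, h0])
    · refine iSup₂_le fun j hj => ?_
      rw [Finset.mem_Icc] at hj
      have hjN : j < N + 1 := by omega
      have hcoe : ((⟨j, hjN⟩ : Fin (N + 1)) : ℕ) = j := rfl
      have : MeasurableSpace.comap (eps j) inferInstance = s ⟨j, hjN⟩ := by
        simp [hs, hF, hcoe]
        rw [if_neg (by omega)]
      rw [this]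
      exact le_biSup s (by simp [Set.mem_setOf_eq, hcoe]; omega)
  · have hjN : k + 1 < N + 1 := by omega
    have hcoe : ((⟨k + 1, hjN⟩ : Fin (N + 1)) : ℕ) = k + 1 := rfl
    have : MeasurableSpace.comap (eps (k + 1)) inferInstance = s ⟨k + 1, hjN⟩ := by
      simp [hs, hF, hcoe]
    rw [this]
    exact le_biSup s (by simp [Set.mem_setOf_eq, hcoe])

lemma helper_cross {Ω : Type*} [MeasurableSpace Ω] {μ : Measure Ω} {mk : MeasurableSpace Ω}
    {Y e : Ω → ℝ} (hind : Indep mk (MeasurableSpace.comap e inferInstance) μ)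
    (hY : @Measurable Ω ℝ mk _ Y) (hYi : Integrable Y μ) (hei : Integrable e μ)
    (hem : ∫ ω, e ω ∂μ = 0) : ∫ ω, Y ω * e ω ∂μ = 0 := by
  have hif : IndepFun Y e μ := indep_of_indep_of_le_left hind hY.comap_le
  have h := IndepFun.integral_mul_eq_mul_integral hif hYi.aestronglyMeasurable
    hei.aestronglyMeasurable
  rw [show (fun ω => Y ω * e ω) = Y * e from rfl, h, hem, mul_zero]

lemma helper_inv {Ω : Type*} [m0 : MeasurableSpace Ω] {μ : Measure Ω} [IsProbabilityMeasure μ]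
    {N : ℕ} {x0 : Ω → ℝ} {eps : ℕ → Ω → ℝ}
    (hx0m : Measurable x0) (hx0L2 : MemLp x0 2 μ)
    (hepsm : ∀ k, Measurable (eps k)) (hepsL2 : ∀ k, 1 ≤ k → k ≤ N → MemLp (eps k) 2 μ)
    {u x : ℕ → Ω → ℝ} {P C R : ℕ → ℝ}
    (hu2 : ∀ k, k < N → MemLp (u k) 2 μ)
    (hum : ∀ k, k < N → @Measurable Ω ℝ (sigmaUpTo x0 eps k) _ (u k))
    (hx0' : x 0 = x0)
    (hdyn : ∀ k, k < N → ∀ ω,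
      x (k + 1) ω = P k * x k ω + C k + R k * u k ω + eps (k + 1) ω) :
    ∀ k, k ≤ N → MemLp (x k) 2 μ ∧ @Measurable Ω ℝ (sigmaUpTo x0 eps k) _ (x k) := by
  intro k
  induction k with
  | zero =>
    intro _
    rw [hx0']
    exact ⟨hx0L2, measurable_sigmaUpTo_x0 0⟩
  | succ n ih =>
    intro h
    have hn : n < N := by omega
    obtain ⟨ihL2, ihm⟩ := ih (by omega)
    have hfn : x (n + 1) = fun ω => P n * x n ω + C n + R n * u n ω + eps (n + 1) ω :=
      funext (hdyn n hn)
    constructor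
    · rw [hfn]
      exact (((ihL2.const_mul _).add (memLp_const _)).add ((hu2 n hn).const_mul _)).add
        (hepsL2 (n + 1) (by omega) (by omega))
    · rw [hfn]
      have h1 : @Measurable Ω ℝ (sigmaUpTo x0 eps (n + 1)) _ (x n) :=
        ihm.mono (sigmaUpTo_mono (Nat.le_succ n)) le_rfl
      have h2 : @Measurable Ω ℝ (sigmaUpTo x0 eps (n + 1)) _ (u n) :=
        (hum n hn).mono (sigmaUpTo_mono (Nat.le_succ n)) le_rfl
      have h3 : @Measurable Ω ℝ (sigmaUpTo x0 eps (n + 1)) _ (eps (n + 1)) :=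
        measurable_sigmaUpTo_eps (by omega) le_rfl
      exact (((h1.const_mul _).add measurable_const).add (h2.const_mul _)).add h3

lemma helper_var_eq {Ω : Type*} [MeasurableSpace Ω] {μ : Measure Ω} [IsProbabilityMeasure μ]
    {f : Ω → ℝ} (hf : MemLp f 2 μ) :
    variance f μ = ∫ ω, (f ω - ∫ ω', f ω' ∂μ) ^ 2 ∂μ := by
  rw [variance_eq_integral hf.aemeasurable]

lemma helper_varstep {Ω : Type*} [MeasurableSpace Ω] {μ : Measure Ω} [IsProbabilityMeasure μ]
    {X' Y e : Ω → ℝ} (hX2 : MemLp X' 2 μ) (hY2 : MemLp Y 2 μ) (he2 : MemLp e 2 μ)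
    (hcross : ∫ ω, Y ω * e ω ∂μ = 0)
    (hdec : ∀ ω, X' ω - ∫ ω', X' ω' ∂μ = Y ω + e ω) :
    variance X' μ = ∫ ω, Y ω ^ 2 ∂μ + ∫ ω, e ω ^ 2 ∂μ := by
  rw [helper_var_eq hX2]
  have h1 : ∀ ω, (X' ω - ∫ ω', X' ω' ∂μ) ^ 2 = Y ω ^ 2 + 2 * (Y ω * e ω) + e ω ^ 2 :=
    fun ω => by rw [hdec ω]; ring
  simp only [h1]
  have i1 : Integrable (fun ω => Y ω ^ 2) μ := hY2.integrable_sq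
  have i2 : Integrable (fun ω => 2 * (Y ω * e ω)) μ := (helper_integrable_mul hY2 he2).const_mul 2
  have i3 : Integrable (fun ω => e ω ^ 2) μ := he2.integrable_sq
  have i12 : Integrable (fun ω => Y ω ^ 2 + 2 * (Y ω * e ω)) μ := i1.add i2
  rw [integral_add i12 i3, integral_add i1 i2, integral_const_mul _ _, hcross, mul_zero, add_zero]

lemma helper_feedsum {I : ℕ} (Eb Ee : Matrix (Fin I) (Fin I) ℝ) (cv cw : Fin I → ℝ)
    (bk : Fin I → ℝ) (aa mm t : ℝ) (s : Finset (Fin I)) :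
    ∑ j ∈ s, bk j * mfFeedback Eb Ee cv cw aa mm t j
      = -(aa * mm * ∑ j ∈ s, bk j * Eb⁻¹.mulVec cv j)
        - aa * (t - mm) * ∑ j ∈ s, bk j * Ee⁻¹.mulVec cw j := by
  simp only [mfFeedback]
  rw [Finset.mul_sum, Finset.mul_sum, ← Finset.sum_neg_distrib, ← Finset.sum_sub_distrib]
  exact Finset.sum_congr rfl fun j _ => by ring

lemma helper_main {Ω : Type*} [m0 : MeasurableSpace Ω]
    (μ : Measure Ω) [IsProbabilityMeasure μ]
    (N I p : ℕ) (hp : 1 ≤ p)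
    (a : ℕ → ℝ) (b : Fin I → ℕ → ℝ)
    (q qbar r rbar : Fin I → ℕ → ℝ) (qN qbarN : Fin I → ℝ)
    (hqbar : ∀ i k, k < N → 0 < qbar i k)
    (hrbar : ∀ i k, k < N → 0 < rbar i k)
    (hqbarN : ∀ i, 0 < qbarN i)
    (x0 : Ω → ℝ) (hx0m : Measurable x0) (hx0L2 : MemLp x0 2 μ)
    (eps : ℕ → Ω → ℝ) (hepsm : ∀ k, Measurable (eps k))
    (hepsL2 : ∀ k, 1 ≤ k → k ≤ N → MemLp (eps k) 2 μ)
    (hepsmean : ∀ k, 1 ≤ k → k ≤ N → ∫ ω, eps k ω ∂μ = 0)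
    (hindep : iIndepFun
      (fun k : Fin (N + 1) => if (k : ℕ) = 0 then x0 else eps k) μ)
    (alphabar alpha gammabar kappa cbar c : Fin I → ℕ → ℝ)
    (Ebar E : ℕ → Matrix (Fin I) (Fin I) ℝ)
    (halphabarN : ∀ i, alphabar i N = qbarN i)
    (halphaN : ∀ i, alpha i N = qN i)
    (hgammabarN : ∀ i, gammabar i N = 0)
    (hkappa : ∀ i k, k < N →
      kappa i k ^ (2 * p - 1) = alphabar i (k + 1) * b i k / rbar i k)
    (hcbar : ∀ i k, k < N → cbar i k = kappa i k / (1 + kappa i k * b i k))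
    (hc : ∀ i k, k < N →
      c i k = alpha i (k + 1) * b i k / (r i k + alpha i (k + 1) * b i k ^ 2))
    (hEbard : ∀ k, k < N → ∀ i, Ebar k i i = 1)
    (hEbaro : ∀ k, k < N → ∀ i j, i ≠ j → Ebar k i j = cbar i k * b j k)
    (hEd : ∀ k, k < N → ∀ i, E k i i = 1)
    (hEo : ∀ k, k < N → ∀ i j, i ≠ j → E k i j = c i k * b j k)
    (hEbarinv : ∀ k, k < N → IsUnit (Ebar k))
    (hEinv : ∀ k, k < N → IsUnit (E k))
    (hden1 : ∀ i k, k < N → 0 < 1 + kappa i k * b i k)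
    (hden2 : ∀ i k, k < N → 0 < r i k + alpha i (k + 1) * b i k ^ 2)
    (halphabar : ∀ i k, k < N →
      alphabar i k = qbar i k
        + rbar i k * ((Ebar k)⁻¹.mulVec (fun l => cbar l k) i * a k) ^ (2 * p)
        + alphabar i (k + 1)
            * (a k - ∑ j, (Ebar k)⁻¹.mulVec (fun l => cbar l k) j * a k * b j k) ^ (2 * p))
    (halpha : ∀ i k, k < N →
      alpha i k = q i k + r i k * ((E k)⁻¹.mulVec (fun l => c l k) i * a k) ^ 2
        + alpha i (k + 1)
            * (a k - ∑ j, (E k)⁻¹.mulVec (fun l => c l k) j * a k * b j k) ^ 2)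
    (hgammabar : ∀ i k, k < N →
      gammabar i k = gammabar i (k + 1)
        + alpha i (k + 1) * ∫ ω, eps (k + 1) ω ^ 2 ∂μ)
    (i : Fin I) (u : ℕ → Ω → ℝ)
    (hu2 : ∀ k, k < N → MemLp (u k) 2 μ)
    (hum : ∀ k, k < N → @Measurable Ω ℝ (sigmaUpTo x0 eps k) _ (u k))
    (x : ℕ → Ω → ℝ) (hx0' : x 0 = x0)
    (hxdyn : ∀ k, k < N → ∀ ω, x (k + 1) ω
      = a k * x k ω + b i k * u k ω
        + ∑ j ∈ Finset.univ.erase i,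
            b j k * mfFeedback (Ebar k) (E k) (fun l => cbar l k) (fun l => c l k)
              (a k) (∫ ω', x k ω' ∂μ) (x k ω) j
        + eps (k + 1) ω) :
    (alpha i 0 * variance x0 μ + alphabar i 0 * (∫ ω, x0 ω ∂μ) ^ (2 * p) + gammabar i 0
        ≤ powerVarCost μ N p (qN i) (qbarN i) (q i) (qbar i) (r i) (rbar i) x u)
    ∧ ((∀ k, k < N → ∀ ω, u k ω = mfFeedback (Ebar k) (E k) (fun l => cbar l k)
          (fun l => c l k) (a k) (∫ ω', x k ω' ∂μ) (x k ω) i) →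
        powerVarCost μ N p (qN i) (qbarN i) (q i) (qbar i) (r i) (rbar i) x u
          = alpha i 0 * variance x0 μ + alphabar i 0 * (∫ ω, x0 ω ∂μ) ^ (2 * p)
              + gammabar i 0) := by
  have hev : Even (2 * p) := ⟨p, two_mul p⟩
  have hodd : Odd (2 * p - 1) := ⟨p - 1, by omega⟩
  -- positivity of alphabar
  have hbarpos : ∀ k, k ≤ N → 0 < alphabar i k := by
    have H : ∀ j k, k ≤ N → N - k = j → 0 < alphabar i k := by
      intro j
      induction j with
      | zero =>
        intro k hk hj
        have : k = N := by omega
        subst this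
        rw [halphabarN]
        exact hqbarN i
      | succ n ih =>
        intro k hk hj
        have hkN : k < N := by omega
        have h2 := ih (k + 1) (by omega) (by omega)
        rw [halphabar i k hkN]
        have e1 : (0:ℝ) ≤ rbar i k * ((Ebar k)⁻¹.mulVec (fun l => cbar l k) i * a k) ^ (2 * p) :=
          mul_nonneg (hrbar i k hkN).le (hev.pow_nonneg _)
        have e2 : (0:ℝ) ≤ alphabar i (k + 1)
            * (a k - ∑ j, (Ebar k)⁻¹.mulVec (fun l => cbar l k) j * a k * b j k) ^ (2 * p) :=
          mul_nonneg h2.le (hev.pow_nonneg _)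
        have := hqbar i k hkN
        linarith
    intro k hk
    exact H (N - k) k hk rfl
  -- affine form of the dynamics
  have hdyn2 : ∀ k, k < N → ∀ ω, x (k + 1) ω
      = (a k - a k * (∑ j ∈ Finset.univ.erase i, b j k * (E k)⁻¹.mulVec (fun l => c l k) j))
            * x k ω
        + (a k * (∫ ω', x k ω' ∂μ)
            * ((∑ j ∈ Finset.univ.erase i, b j k * (E k)⁻¹.mulVec (fun l => c l k) j)
              - (∑ j ∈ Finset.univ.erase i, b j k * (Ebar k)⁻¹.mulVec (fun l => cbar l k) j)))
        + b i k * u k ω + eps (k + 1) ω := by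
    intro k hk ω
    rw [hxdyn k hk ω, helper_feedsum]
    ring
  have hinv := helper_inv hx0m hx0L2 hepsm hepsL2 hu2 hum hx0' hdyn2
  -- the one-step inequality / equality
  have step : ∀ k, k < N →
      ((alpha i k * variance (x k) μ + alphabar i k * (∫ ω, x k ω ∂μ) ^ (2 * p) + gammabar i k
        ≤ (q i k * variance (x k) μ + qbar i k * (∫ ω, x k ω ∂μ) ^ (2 * p)
            + r i k * variance (u k) μ + rbar i k * (∫ ω, u k ω ∂μ) ^ (2 * p))
          + (alpha i (k + 1) * variance (x (k + 1)) μ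
              + alphabar i (k + 1) * (∫ ω, x (k + 1) ω ∂μ) ^ (2 * p) + gammabar i (k + 1)))
      ∧ ((∀ ω, u k ω = mfFeedback (Ebar k) (E k) (fun l => cbar l k) (fun l => c l k)
            (a k) (∫ ω', x k ω' ∂μ) (x k ω) i) →
          (q i k * variance (x k) μ + qbar i k * (∫ ω, x k ω ∂μ) ^ (2 * p)
            + r i k * variance (u k) μ + rbar i k * (∫ ω, u k ω ∂μ) ^ (2 * p))
          + (alpha i (k + 1) * variance (x (k + 1)) μ
              + alphabar i (k + 1) * (∫ ω, x (k + 1) ω ∂μ) ^ (2 * p) + gammabar i (k + 1))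
          = alpha i k * variance (x k) μ + alphabar i k * (∫ ω, x k ω ∂μ) ^ (2 * p)
              + gammabar i k)) := by
    intro k hk
    have hd := hdyn2 k hk
    have HA := halpha i k hk
    have HB := halphabar i k hk
    have HG := hgammabar i k hk
    have hrow1 := helper_row (hEbarinv k hk) (fun l => cbar l k) (fun j => b j k)
      (hEbard k hk) (hEbaro k hk) i
    have hrow2 := helper_row (hEinv k hk) (fun l => c l k) (fun j => b j k)
      (hEd k hk) (hEo k hk) i
    set m := ∫ ω', x k ω' ∂μ with hm
    set mu := ∫ ω', u k ω' ∂μ with hmu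
    set DB := (Ebar k)⁻¹.mulVec (fun l => cbar l k) with hDB
    set DD := (E k)⁻¹.mulVec (fun l => c l k) with hDD
    set SB := ∑ j ∈ Finset.univ.erase i, b j k * DB j with hSB
    set SS := ∑ j ∈ Finset.univ.erase i, b j k * DD j with hSS
    -- rewrite the full sums in HA, HB
    have HBf : (∑ j, DB j * a k * b j k) = a k * (b i k * DB i + SB) := by
      rw [← Finset.add_sum_erase _ (fun j => DB j * a k * b j k) (Finset.mem_univ i)]
      have haux : ∑ j ∈ Finset.univ.erase i, DB j * a k * b j k = a k * SB := by
        rw [hSB, Finset.mul_sum]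
        exact Finset.sum_congr rfl fun j _ => by ring
      rw [haux]
      ring
    have HSf : (∑ j, DD j * a k * b j k) = a k * (b i k * DD i + SS) := by
      rw [← Finset.add_sum_erase _ (fun j => DD j * a k * b j k) (Finset.mem_univ i)]
      have haux : ∑ j ∈ Finset.univ.erase i, DD j * a k * b j k = a k * SS := by
        rw [hSS, Finset.mul_sum]
        exact Finset.sum_congr rfl fun j _ => by ring
      rw [haux]
      ring
    rw [HBf] at HB
    rw [HSf] at HA
    -- row identities
    have hden1' := hden1 i k hk
    have hden2' := hden2 i k hk
    have hrb := hrbar i k hk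
    have hcb2 : cbar i k * (1 + kappa i k * b i k) = kappa i k := by
      rw [hcbar i k hk]
      field_simp
    have h3 : DB i = cbar i k * (1 - SB) := by linear_combination hrow1
    have h4 : DB i * (1 + kappa i k * b i k) = kappa i k * (1 - SB) := by
      calc DB i * (1 + kappa i k * b i k) = cbar i k * (1 - SB) * (1 + kappa i k * b i k) := by
            rw [h3]
        _ = (cbar i k * (1 + kappa i k * b i k)) * (1 - SB) := by ring
        _ = kappa i k * (1 - SB) := by rw [hcb2]
    have hc2 : c i k * (r i k + alpha i (k + 1) * b i k ^ 2) = alpha i (k + 1) * b i k := by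
      rw [hc i k hk]
      field_simp
    have h5 : DD i = c i k * (1 - SS) := by linear_combination hrow2
    have hI2 : (r i k + alpha i (k + 1) * b i k ^ 2) * DD i
        = alpha i (k + 1) * b i k * (1 - SS) := by
      calc (r i k + alpha i (k + 1) * b i k ^ 2) * DD i
          = (c i k * (r i k + alpha i (k + 1) * b i k ^ 2)) * (1 - SS) := by rw [h5]; ring
        _ = alpha i (k + 1) * b i k * (1 - SS) := by rw [hc2]
    -- basic integrability
    have hxk2 : MemLp (x k) 2 μ := (hinv k hk.le).1
    have hxkm := (hinv k hk.le).2
    have huk2 := hu2 k hk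
    have hukm := hum k hk
    have hx'2 : MemLp (x (k + 1)) 2 μ := (hinv (k + 1) hk).1
    have he2 : MemLp (eps (k + 1)) 2 μ := hepsL2 (k + 1) (by omega) (by omega)
    have hxi : Integrable (x k) μ := hxk2.integrable one_le_two
    have hui : Integrable (u k) μ := huk2.integrable one_le_two
    have hei : Integrable (eps (k + 1)) μ := he2.integrable one_le_two
    have hem : ∫ ω, eps (k + 1) ω ∂μ = 0 := hepsmean (k + 1) (by omega) (by omega)
    -- the mean of x (k+1)
    have i1 : Integrable (fun ω => (a k - a k * SS) * x k ω) μ := hxi.const_mul _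
    have i2 : Integrable (fun ω => a k * m * (SS - SB)) μ := integrable_const _
    have i3 : Integrable (fun ω => b i k * u k ω) μ := hui.const_mul _
    have i12 : Integrable (fun ω => (a k - a k * SS) * x k ω + a k * m * (SS - SB)) μ :=
      i1.add i2
    have i123 : Integrable
        (fun ω => (a k - a k * SS) * x k ω + a k * m * (SS - SB) + b i k * u k ω) μ :=
      i12.add i3
    have hm' : (∫ ω, x (k + 1) ω ∂μ) = a k * (1 - SB) * m + b i k * mu := by
      simp only [hd]
      rw [integral_add i123 hei, integral_add i12 i3, integral_add i1 i2,
        integral_const_mul _ _, integral_const_mul _ _, integral_const_mul _ _,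
        integral_const, hem]
      simp only [measure_univ, probReal_univ, ENNReal.toReal_one, one_smul, ← hm, ← hmu]
      ring
    -- the centered next state
    set Y : Ω → ℝ := fun ω => (a k - a k * SS) * (x k ω - m) + b i k * (u k ω - mu) with hY
    have hcent : ∀ ω, x (k + 1) ω - ∫ ω', x (k + 1) ω' ∂μ = Y ω + eps (k + 1) ω := by
      intro ω
      simp only [hY]
      rw [hd ω, hm']
      ring
    have hY2 : MemLp Y 2 μ := by
      have ha1 : MemLp (fun ω => x k ω - m) 2 μ := hxk2.sub (memLp_const m)
      have ha2 : MemLp (fun ω => u k ω - mu) 2 μ := huk2.sub (memLp_const mu)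
      exact (ha1.const_mul _).add (ha2.const_mul _)
    have hYmk : @Measurable Ω ℝ (sigmaUpTo x0 eps k) _ Y := by
      have hb1 : @Measurable Ω ℝ (sigmaUpTo x0 eps k) _ (fun ω => x k ω - m) :=
        hxkm.sub measurable_const
      have hb2 : @Measurable Ω ℝ (sigmaUpTo x0 eps k) _ (fun ω => u k ω - mu) :=
        hukm.sub measurable_const
      exact (hb1.const_mul _).add (hb2.const_mul _)
    have hYi : Integrable Y μ := hY2.integrable one_le_two
    have hcross : ∫ ω, Y ω * eps (k + 1) ω ∂μ = 0 :=
      helper_cross (helper_indep hx0m hepsm hindep hk) hYmk hYi hei hem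
    have hvar' : variance (x (k + 1)) μ
        = ∫ ω, Y ω ^ 2 ∂μ + ∫ ω, eps (k + 1) ω ^ 2 ∂μ :=
      helper_varstep hx'2 hY2 he2 hcross hcent
    have hvarx : variance (x k) μ = ∫ ω, (x k ω - m) ^ 2 ∂μ := by
      rw [helper_var_eq hxk2, ← hm]
    have hvaru : variance (u k) μ = ∫ ω, (u k ω - mu) ^ 2 ∂μ := by
      rw [helper_var_eq huk2, ← hmu]
    -- quadratic comparison
    have hid : (r i k + alpha i (k + 1) * b i k ^ 2) * (DD i * a k)
        = alpha i (k + 1) * b i k * (a k - a k * SS) := by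
      rw [← mul_assoc, hI2]
      ring
    have hK : r i k * (DD i * a k) ^ 2
        + alpha i (k + 1) * ((a k - a k * SS) - b i k * (DD i * a k)) ^ 2
        = alpha i k - q i k := by
      rw [HA]
      ring
    have hptw : ∀ ω, (alpha i k - q i k) * (x k ω - m) ^ 2
        ≤ r i k * (u k ω - mu) ^ 2 + alpha i (k + 1) * Y ω ^ 2 := by
      intro ω
      simp only [hY]
      rw [← hK]
      exact helper_quad hden2' hid
    have iK : Integrable (fun ω => (alpha i k - q i k) * (x k ω - m) ^ 2) μ :=
      ((hxk2.sub (memLp_const m)).integrable_sq).const_mul _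
    have iR1 : Integrable (fun ω => r i k * (u k ω - mu) ^ 2) μ :=
      ((huk2.sub (memLp_const mu)).integrable_sq).const_mul _
    have iR2 : Integrable (fun ω => alpha i (k + 1) * Y ω ^ 2) μ :=
      (hY2.integrable_sq).const_mul _
    have iR : Integrable (fun ω => r i k * (u k ω - mu) ^ 2 + alpha i (k + 1) * Y ω ^ 2) μ :=
      iR1.add iR2
    have hintineq := integral_mono iK iR hptw
    rw [integral_add iR1 iR2, integral_const_mul _ _, integral_const_mul _ _,
      integral_const_mul _ _] at hintineq
    rw [← hvarx, ← hvaru] at hintineq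
    -- mean comparison
    have e1 : -(DB i * a k * m)
        = -(kappa i k * ((a k - a k * (b i k * DB i + SB)) * m)) := by
      linear_combination (-(a k * m)) * h4
    have e2 : (-(DB i * a k * m)) ^ (2 * p - 1)
        = -(kappa i k ^ (2 * p - 1) * ((a k - a k * (b i k * DB i + SB)) * m) ^ (2 * p - 1)) := by
      rw [e1, hodd.neg_pow, mul_pow]
    have hfoc : rbar i k * (-(DB i * a k * m)) ^ (2 * p - 1)
        + alphabar i (k + 1) * b i k
            * (a k * (1 - SB) * m + b i k * (-(DB i * a k * m))) ^ (2 * p - 1) = 0 := by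
      have hin : a k * (1 - SB) * m + b i k * (-(DB i * a k * m))
          = (a k - a k * (b i k * DB i + SB)) * m := by ring
      rw [hin, e2, hkappa i k hk]
      field_simp
      ring
    have hmm := helper_mean_min hp hrb.le (hbarpos (k + 1) (by omega)).le hfoc mu
    have hls : rbar i k * (-(DB i * a k * m)) ^ (2 * p)
        + alphabar i (k + 1)
            * (a k * (1 - SB) * m + b i k * (-(DB i * a k * m))) ^ (2 * p)
        = (alphabar i k - qbar i k) * m ^ (2 * p) := by
      have hb1 : (-(DB i * a k * m)) ^ (2 * p) = (DB i * a k) ^ (2 * p) * m ^ (2 * p) := by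
        rw [hev.neg_pow, mul_pow]
      have hb2 : (a k * (1 - SB) * m + b i k * (-(DB i * a k * m))) ^ (2 * p)
          = (a k - a k * (b i k * DB i + SB)) ^ (2 * p) * m ^ (2 * p) := by
        rw [show a k * (1 - SB) * m + b i k * (-(DB i * a k * m))
            = (a k - a k * (b i k * DB i + SB)) * m from by ring, mul_pow]
      rw [hb1, hb2, HB]
      ring
    have hmean2 : (alphabar i k - qbar i k) * m ^ (2 * p)
        ≤ rbar i k * mu ^ (2 * p) + alphabar i (k + 1) * (∫ ω, x (k + 1) ω ∂μ) ^ (2 * p) := by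
      rw [hm']
      calc (alphabar i k - qbar i k) * m ^ (2 * p)
          = rbar i k * (-(DB i * a k * m)) ^ (2 * p)
            + alphabar i (k + 1)
                * (a k * (1 - SB) * m + b i k * (-(DB i * a k * m))) ^ (2 * p) := hls.symm
        _ ≤ rbar i k * mu ^ (2 * p)
            + alphabar i (k + 1) * (a k * (1 - SB) * m + b i k * mu) ^ (2 * p) := hmm
    have A3 : alpha i (k + 1) * variance (x (k + 1)) μ
        = alpha i (k + 1) * ∫ ω, Y ω ^ 2 ∂μ
          + alpha i (k + 1) * ∫ ω, eps (k + 1) ω ^ 2 ∂μ := by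
      rw [hvar']
      ring
    constructor
    · linarith
    · intro hfk
      simp only [mfFeedback, ← hDB, ← hDD] at hfk
      have hmueq : mu = -(DB i * a k * m) := by
        rw [hmu]
        rw [integral_congr_ae (ae_of_all μ hfk)]
        have j1 : Integrable (fun ω => -DB i * a k * m) μ := integrable_const _
        have j2 : Integrable (fun ω => DD i * a k * (x k ω - m)) μ :=
          (hxi.sub (integrable_const _)).const_mul _
        rw [integral_sub j1 j2, integral_const, integral_const_mul _ _,
          integral_sub hxi (integrable_const _), integral_const]
        simp only [measure_univ, probReal_univ, ENNReal.toReal_one, one_smul, ← hm]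
        ring
      have hveq : ∀ ω, u k ω - mu = -(DD i * a k) * (x k ω - m) := by
        intro ω
        rw [hfk ω, hmueq]
        ring
      have hpe : ∀ ω, r i k * (u k ω - mu) ^ 2 + alpha i (k + 1) * Y ω ^ 2
          = (alpha i k - q i k) * (x k ω - m) ^ 2 := by
        intro ω
        simp only [hY]
        rw [hveq ω, ← hK]
        ring
      have E2 : r i k * variance (u k) μ + alpha i (k + 1) * ∫ ω, Y ω ^ 2 ∂μ
          = (alpha i k - q i k) * variance (x k) μ := by
        have h := integral_congr_ae (ae_of_all μ hpe)
        rw [integral_add iR1 iR2, integral_const_mul _ _, integral_const_mul _ _,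
          integral_const_mul _ _] at h
        rw [hvaru, hvarx]
        exact h
      have E3 : rbar i k * mu ^ (2 * p)
          + alphabar i (k + 1) * (∫ ω, x (k + 1) ω ∂μ) ^ (2 * p)
          = (alphabar i k - qbar i k) * m ^ (2 * p) := by
        rw [hm', hmueq]
        exact hls
      linarith [A3, E2, E3, HG]
  -- assemble the telescoping sum
  have hVN : alpha i N * variance (x N) μ + alphabar i N * (∫ ω, x N ω ∂μ) ^ (2 * p)
      + gammabar i N
      = qN i * variance (x N) μ + qbarN i * (∫ ω, x N ω ∂μ) ^ (2 * p) := by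
    rw [halphaN, halphabarN, hgammabarN]
    ring
  have htel := Finset.sum_range_sub'
    (fun k => alpha i k * variance (x k) μ + alphabar i k * (∫ ω, x k ω ∂μ) ^ (2 * p)
      + gammabar i k) N
  have hx0var : variance (x 0) μ = variance x0 μ := by rw [hx0']
  have hx0int : (∫ ω, x 0 ω ∂μ) = ∫ ω, x0 ω ∂μ := by rw [hx0']
  constructor
  · have hsum_ge : ∑ k ∈ Finset.range N,
        ((fun k => alpha i k * variance (x k) μ
            + alphabar i k * (∫ ω, x k ω ∂μ) ^ (2 * p) + gammabar i k) k
          - (fun k => alpha i k * variance (x k) μ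
            + alphabar i k * (∫ ω, x k ω ∂μ) ^ (2 * p) + gammabar i k) (k + 1))
        ≤ ∑ k ∈ Finset.range N,
          (q i k * variance (x k) μ + qbar i k * (∫ ω, x k ω ∂μ) ^ (2 * p)
            + r i k * variance (u k) μ + rbar i k * (∫ ω, u k ω ∂μ) ^ (2 * p)) := by
      refine Finset.sum_le_sum fun k hk => ?_
      have := (step k (Finset.mem_range.mp hk)).1
      beta_reduce
      linarith
    rw [htel] at hsum_ge
    simp only [powerVarCost]
    beta_reduce at hsum_ge
    rw [hx0'] at hsum_ge
    linarith
  · intro hfeed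
    have hsum_eq : ∑ k ∈ Finset.range N,
        (q i k * variance (x k) μ + qbar i k * (∫ ω, x k ω ∂μ) ^ (2 * p)
          + r i k * variance (u k) μ + rbar i k * (∫ ω, u k ω ∂μ) ^ (2 * p))
        = ∑ k ∈ Finset.range N,
          ((fun k => alpha i k * variance (x k) μ
              + alphabar i k * (∫ ω, x k ω ∂μ) ^ (2 * p) + gammabar i k) k
            - (fun k => alpha i k * variance (x k) μ
              + alphabar i k * (∫ ω, x k ω ∂μ) ^ (2 * p) + gammabar i k) (k + 1)) := by
      refine Finset.sum_congr rfl fun k hk => ?_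
      have hkN := Finset.mem_range.mp hk
      have := (step k hkN).2 (hfeed k hkN)
      beta_reduce
      linarith
    rw [htel] at hsum_eq
    simp only [powerVarCost]
    beta_reduce at hsum_eq
    rw [hx0'] at hsum_eq
    linarith

/-- Proposition 4 (variance-aware `2p`-order game with additive noise): the feedback
strategies `u*_{ik} = −(Ē_k⁻¹·c̄_k)_i·ā_k·x̄_k − (E_k⁻¹·c_k)_i·ā_k·(x_k − x̄_k)` form a
Nash equilibrium over adapted square-integrable strategies, and the equilibrium
expected cost of agent `i` equals `α_{i0}·var(x₀) + ᾱ_{i0}·(E[x₀])^(2p) + γ̄_{i0}`. -/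
theorem variance_aware_power_game_nash {Ω : Type*} [MeasurableSpace Ω]
    (μ : Measure Ω) [IsProbabilityMeasure μ]
    (N I p : ℕ) (hN : 1 ≤ N) (hI : 2 ≤ I) (hp : 1 ≤ p)
    (a : ℕ → ℝ) (b : Fin I → ℕ → ℝ)
    (q qbar r rbar : Fin I → ℕ → ℝ) (qN qbarN : Fin I → ℝ)
    (hq : ∀ i k, k < N → 0 < q i k) (hqbar : ∀ i k, k < N → 0 < qbar i k)
    (hr : ∀ i k, k < N → 0 < r i k) (hrbar : ∀ i k, k < N → 0 < rbar i k)
    (hqN : ∀ i, 0 < qN i) (hqbarN : ∀ i, 0 < qbarN i)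
    (x0 : Ω → ℝ) (hx0m : Measurable x0) (hx0L2 : MemLp x0 2 μ)
    (hx02p : Integrable (fun ω => x0 ω ^ (2 * p)) μ)
    (eps : ℕ → Ω → ℝ) (hepsm : ∀ k, Measurable (eps k))
    (hepsL2 : ∀ k, 1 ≤ k → k ≤ N → MemLp (eps k) 2 μ)
    (hepsmean : ∀ k, 1 ≤ k → k ≤ N → ∫ ω, eps k ω ∂μ = 0)
    (hindep : iIndepFun
      (fun k : Fin (N + 1) => if (k : ℕ) = 0 then x0 else eps k) μ)
    (alphabar alpha gammabar kappa cbar c : Fin I → ℕ → ℝ)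
    (Ebar E : ℕ → Matrix (Fin I) (Fin I) ℝ)
    (halphabarN : ∀ i, alphabar i N = qbarN i)
    (halphaN : ∀ i, alpha i N = qN i)
    (hgammabarN : ∀ i, gammabar i N = 0)
    (hkappa : ∀ i k, k < N →
      kappa i k ^ (2 * p - 1) = alphabar i (k + 1) * b i k / rbar i k)
    (hcbar : ∀ i k, k < N → cbar i k = kappa i k / (1 + kappa i k * b i k))
    (hc : ∀ i k, k < N →
      c i k = alpha i (k + 1) * b i k / (r i k + alpha i (k + 1) * b i k ^ 2))
    (hEbard : ∀ k, k < N → ∀ i, Ebar k i i = 1)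
    (hEbaro : ∀ k, k < N → ∀ i j, i ≠ j → Ebar k i j = cbar i k * b j k)
    (hEd : ∀ k, k < N → ∀ i, E k i i = 1)
    (hEo : ∀ k, k < N → ∀ i j, i ≠ j → E k i j = c i k * b j k)
    (hEbarinv : ∀ k, k < N → IsUnit (Ebar k))
    (hEinv : ∀ k, k < N → IsUnit (E k))
    (hden1 : ∀ i k, k < N → 0 < 1 + kappa i k * b i k)
    (hden2 : ∀ i k, k < N → 0 < r i k + alpha i (k + 1) * b i k ^ 2)
    (halphabar : ∀ i k, k < N →
      alphabar i k = qbar i k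
        + rbar i k * ((Ebar k)⁻¹.mulVec (fun l => cbar l k) i * a k) ^ (2 * p)
        + alphabar i (k + 1)
            * (a k - ∑ j, (Ebar k)⁻¹.mulVec (fun l => cbar l k) j * a k * b j k) ^ (2 * p))
    (halpha : ∀ i k, k < N →
      alpha i k = q i k + r i k * ((E k)⁻¹.mulVec (fun l => c l k) i * a k) ^ 2
        + alpha i (k + 1)
            * (a k - ∑ j, (E k)⁻¹.mulVec (fun l => c l k) j * a k * b j k) ^ 2)
    (hgammabar : ∀ i k, k < N →
      gammabar i k = gammabar i (k + 1)
        + alpha i (k + 1) * ∫ ω, eps (k + 1) ω ^ 2 ∂μ)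
    (xstar : ℕ → Ω → ℝ) (hxstar0 : xstar 0 = x0)
    (hxstar : ∀ k, k < N → ∀ ω, xstar (k + 1) ω
      = a k * xstar k ω
        + ∑ j, b j k * mfFeedback (Ebar k) (E k) (fun l => cbar l k) (fun l => c l k)
            (a k) (∫ ω', xstar k ω' ∂μ) (xstar k ω) j
        + eps (k + 1) ω) :
    (∀ i : Fin I, ∀ u : ℕ → Ω → ℝ,
      (∀ k, k < N → MemLp (u k) 2 μ) →
      (∀ k, k < N → @Measurable Ω ℝ (sigmaUpTo x0 eps k) _ (u k)) →
      ∀ x : ℕ → Ω → ℝ, x 0 = x0 →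
      (∀ k, k < N → ∀ ω, x (k + 1) ω
        = a k * x k ω + b i k * u k ω
          + ∑ j ∈ Finset.univ.erase i,
              b j k * mfFeedback (Ebar k) (E k) (fun l => cbar l k) (fun l => c l k)
                (a k) (∫ ω', x k ω' ∂μ) (x k ω) j
          + eps (k + 1) ω) →
      powerVarCost μ N p (qN i) (qbarN i) (q i) (qbar i) (r i) (rbar i) xstar
          (fun k ω => mfFeedback (Ebar k) (E k) (fun l => cbar l k) (fun l => c l k)
            (a k) (∫ ω', xstar k ω' ∂μ) (xstar k ω) i)
        ≤ powerVarCost μ N p (qN i) (qbarN i) (q i) (qbar i) (r i) (rbar i) x u) ∧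
    (∀ i : Fin I,
      powerVarCost μ N p (qN i) (qbarN i) (q i) (qbar i) (r i) (rbar i) xstar
          (fun k ω => mfFeedback (Ebar k) (E k) (fun l => cbar l k) (fun l => c l k)
            (a k) (∫ ω', xstar k ω' ∂μ) (xstar k ω) i)
        = alpha i 0 * variance x0 μ + alphabar i 0 * (∫ ω, x0 ω ∂μ) ^ (2 * p)
            + gammabar i 0) := by
  -- invariants for the equilibrium trajectory
  have hxstar_dyn0 : ∀ k, k < N → ∀ ω, xstar (k + 1) ω
      = (a k - a k * (∑ j, b j k * (E k)⁻¹.mulVec (fun l => c l k) j)) * xstar k ω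
        + (a k * (∫ ω', xstar k ω' ∂μ)
            * ((∑ j, b j k * (E k)⁻¹.mulVec (fun l => c l k) j)
              - (∑ j, b j k * (Ebar k)⁻¹.mulVec (fun l => cbar l k) j)))
        + (0:ℝ) * (0:ℝ) + eps (k + 1) ω := by
    intro k hk ω
    rw [hxstar k hk ω, helper_feedsum]
    ring
  have hxsinv := helper_inv (u := fun _ _ => (0:ℝ)) (R := fun _ => (0:ℝ))
    hx0m hx0L2 hepsm hepsL2 (fun _ _ => memLp_const 0) (fun _ _ => measurable_const)
    hxstar0 hxstar_dyn0
  -- admissibility of the equilibrium feedback controls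
  have hust2 : ∀ i : Fin I, ∀ k, k < N →
      MemLp (fun ω => mfFeedback (Ebar k) (E k) (fun l => cbar l k) (fun l => c l k)
        (a k) (∫ ω', xstar k ω' ∂μ) (xstar k ω) i) 2 μ := by
    intro i k hk
    have hfe : (fun ω => mfFeedback (Ebar k) (E k) (fun l => cbar l k) (fun l => c l k)
          (a k) (∫ ω', xstar k ω' ∂μ) (xstar k ω) i)
        = fun ω => (-((Ebar k)⁻¹.mulVec (fun l => cbar l k) i * a k * (∫ ω', xstar k ω' ∂μ))
            + (Ebar k)⁻¹.mulVec (fun l => cbar l k) i * 0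
            - ((E k)⁻¹.mulVec (fun l => c l k) i * a k)
                * (xstar k ω - ∫ ω', xstar k ω' ∂μ)) := by
      funext ω
      simp only [mfFeedback]
      ring
    rw [hfe]
    exact (memLp_const _).sub
      (((hxsinv k hk.le).1.sub (memLp_const _)).const_mul _)
  have hustm : ∀ i : Fin I, ∀ k, k < N →
      @Measurable Ω ℝ (sigmaUpTo x0 eps k) _
        (fun ω => mfFeedback (Ebar k) (E k) (fun l => cbar l k) (fun l => c l k)
          (a k) (∫ ω', xstar k ω' ∂μ) (xstar k ω) i) := by
    intro i k hk
    simp only [mfFeedback]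
    exact (measurable_const.mul ((hxsinv k hk.le).2.sub measurable_const)).const_sub _
  -- the equilibrium trajectory satisfies the deviation-form dynamics
  have hxstar_dev : ∀ i : Fin I, ∀ k, k < N → ∀ ω, xstar (k + 1) ω
      = a k * xstar k ω
        + b i k * (fun k ω => mfFeedback (Ebar k) (E k) (fun l => cbar l k) (fun l => c l k)
            (a k) (∫ ω', xstar k ω' ∂μ) (xstar k ω) i) k ω
        + ∑ j ∈ Finset.univ.erase i,
            b j k * mfFeedback (Ebar k) (E k) (fun l => cbar l k) (fun l => c l k)
              (a k) (∫ ω', xstar k ω' ∂μ) (xstar k ω) j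
        + eps (k + 1) ω := by
    intro i k hk ω
    rw [hxstar k hk ω,
      ← Finset.add_sum_erase _ (fun j => b j k * mfFeedback (Ebar k) (E k)
        (fun l => cbar l k) (fun l => c l k) (a k) (∫ ω', xstar k ω' ∂μ) (xstar k ω) j)
        (Finset.mem_univ i)]
    ring
  have key := fun (i : Fin I) (u : ℕ → Ω → ℝ)
      (hu2 : ∀ k, k < N → MemLp (u k) 2 μ)
      (hum : ∀ k, k < N → @Measurable Ω ℝ (sigmaUpTo x0 eps k) _ (u k))
      (x : ℕ → Ω → ℝ) (hx0' : x 0 = x0)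
      (hxdyn : ∀ k, k < N → ∀ ω, x (k + 1) ω
        = a k * x k ω + b i k * u k ω
          + ∑ j ∈ Finset.univ.erase i,
              b j k * mfFeedback (Ebar k) (E k) (fun l => cbar l k) (fun l => c l k)
                (a k) (∫ ω', x k ω' ∂μ) (x k ω) j
          + eps (k + 1) ω) =>
    helper_main μ N I p hp a b q qbar r rbar qN qbarN hqbar hrbar hqbarN x0 hx0m hx0L2
      eps hepsm hepsL2 hepsmean hindep alphabar alpha gammabar kappa cbar c Ebar E
      halphabarN halphaN hgammabarN hkappa hcbar hc hEbard hEbaro hEd hEo hEbarinv hEinv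
      hden1 hden2 halphabar halpha hgammabar i u hu2 hum x hx0' hxdyn
  have part2 : ∀ i : Fin I,
      powerVarCost μ N p (qN i) (qbarN i) (q i) (qbar i) (r i) (rbar i) xstar
          (fun k ω => mfFeedback (Ebar k) (E k) (fun l => cbar l k) (fun l => c l k)
            (a k) (∫ ω', xstar k ω' ∂μ) (xstar k ω) i)
        = alpha i 0 * variance x0 μ + alphabar i 0 * (∫ ω, x0 ω ∂μ) ^ (2 * p)
            + gammabar i 0 := by
    intro i
    exact (key i _ (hust2 i) (hustm i) xstar hxstar0 (hxstar_dev i)).2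
      (fun k hk ω => rfl)
  refine ⟨?_, part2⟩
  intro i u hu2 hum x hx0' hxdyn
  rw [part2 i]
  exact (key i u hu2 hum x hx0' hxdyn).1
end
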